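/- arXiv:1710.04907 — 6 statements merged into one kernel-verified Lean document; each statement's English description precedes it below -/
import Mathlib

section
/- For every real p ≥ 2 there exists a constant C = C(p) > 0 such that for all real numbers a, b one has |a - b|^p - |a|^p ≥ -p·|a|^{p-2}·a·b + C·|b|^p (with |a|^{p-2}·a interpreted as 0 when a = 0). -/
open Real

/-- Superadditivity: for `q ≥ 1` and nonneg reals, `u^q + v^q ≤ (u+v)^q`. -/
private lemma rpow_add_rpow_le_rpow_add' {u v q : ℝ} (hu : 0 ≤ u) (hv : 0 ≤ v)
    (hq : 1 ≤ q) : u ^ q + v ^ q ≤ (u + v) ^ q := by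
  rcases eq_or_lt_of_le (add_nonneg hu hv) with h | h
  · have hu0 : u = 0 := by linarith [hv, hu]
    have hv0 : v = 0 := by linarith
    subst hu0; subst hv0
    simp [Real.zero_rpow (by linarith : q ≠ 0)]
  · have hq0 : (0:ℝ) < q := by linarith
    have h1 : u ^ q ≤ u * (u + v) ^ (q - 1) := by
      calc u ^ q = u ^ (1 + (q - 1)) := by ring_nf
        _ = u ^ (1:ℝ) * u ^ (q - 1) := Real.rpow_add' hu (by linarith)
        _ = u * u ^ (q - 1) := by rw [Real.rpow_one]
        _ ≤ u * (u + v) ^ (q - 1) := by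
            apply mul_le_mul_of_nonneg_left _ hu
            exact Real.rpow_le_rpow hu (by linarith) (by linarith)
    have h2 : v ^ q ≤ v * (u + v) ^ (q - 1) := by
      calc v ^ q = v ^ (1 + (q - 1)) := by ring_nf
        _ = v ^ (1:ℝ) * v ^ (q - 1) := Real.rpow_add' hv (by linarith)
        _ = v * v ^ (q - 1) := by rw [Real.rpow_one]
        _ ≤ v * (u + v) ^ (q - 1) := by
            apply mul_le_mul_of_nonneg_left _ hv
            exact Real.rpow_le_rpow hv (by linarith) (by linarith)
    calc u ^ q + v ^ q ≤ (u + v) * (u + v) ^ (q - 1) := by linarith [h1, h2]; 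
      _ = (u + v) ^ (1 + (q - 1)) := by
          rw [Real.rpow_add h, Real.rpow_one]
      _ = (u + v) ^ q := by ring_nf

/-- Two-point convexity: `((u+v)/2)^q ≤ (u^q + v^q)/2` for nonneg `u, v` and `q ≥ 1`. -/
private lemma rpow_half_add_le {u v q : ℝ} (hu : 0 ≤ u) (hv : 0 ≤ v) (hq : 1 ≤ q) :
    ((u + v) / 2) ^ q ≤ (u ^ q + v ^ q) / 2 := by
  have h := (convexOn_rpow hq).2 (Set.mem_Ici.mpr hu) (Set.mem_Ici.mpr hv)
    (by norm_num : (0:ℝ) ≤ 1/2) (by norm_num : (0:ℝ) ≤ 1/2) (by norm_num)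
  simp only [smul_eq_mul] at h
  calc ((u + v) / 2) ^ q = (1/2 * u + 1/2 * v) ^ q := by ring_nf
    _ ≤ 1/2 * u ^ q + 1/2 * v ^ q := h
    _ = (u ^ q + v ^ q) / 2 := by ring

/-- Tangent line inequality for `x > 0`, `m ≥ 0`. -/
private lemma tangent_pos_nonneg {p x m : ℝ} (hp : 2 ≤ p) (hx : 0 < x) (hm : 0 ≤ m) :
    x ^ p + p * x ^ (p - 1) * (m - x) ≤ m ^ p := by
  have h := one_add_mul_self_le_rpow_one_add
    (show (-1:ℝ) ≤ m / x - 1 by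
      have : 0 ≤ m / x := div_nonneg hm hx.le
      linarith) (show (1:ℝ) ≤ p by linarith)
  have hxp : (0:ℝ) < x ^ p := Real.rpow_pos_of_pos hx p
  have key : (1 + p * (m/x - 1)) * x ^ p ≤ (m/x) ^ p * x ^ p := by
    have h2 : (1 + (m/x - 1)) ^ p = (m/x) ^ p := by ring_nf
    nlinarith [h, hxp]
  have heq : (m/x) ^ p * x ^ p = m ^ p := by
    rw [Real.div_rpow hm hx.le]
    field_simp
  rw [heq] at key
  have hx1 : x ^ (p-1) * x = x ^ p := by
    rw [← Real.rpow_add_one hx.ne' (p-1)]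
    norm_num
  have hexp : (1 + p * (m/x - 1)) * x ^ p = x ^ p + p * x ^ (p-1) * (m - x) := by
    field_simp
    rw [← hx1]
    ring
  linarith [key, hexp ▸ key]

/-- Tangent line inequality for `x > 0`, any `m`. -/
private lemma tangent_pos {p x m : ℝ} (hp : 2 ≤ p) (hx : 0 < x) :
    x ^ p + p * x ^ (p - 1) * (m - x) ≤ |m| ^ p := by
  rcases le_or_gt 0 m with hm | hm
  · rw [abs_of_nonneg hm]; exact tangent_pos_nonneg hp hx hm
  · rw [abs_of_neg hm]
    have h1 : x ^ p + p * x ^ (p - 1) * (-m - x) ≤ (-m) ^ p :=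
      tangent_pos_nonneg hp hx (by linarith)
    have h2 : (0:ℝ) ≤ x ^ (p-1) := (Real.rpow_pos_of_pos hx _).le
    have h3 : p * x ^ (p-1) * (m - x) ≤ p * x ^ (p-1) * (-m - x) := by
      apply mul_le_mul_of_nonneg_left (by linarith) (mul_nonneg (by linarith) h2)
    linarith

/-- Tangent line inequality: `|x|^p + p|x|^{p-2} x (m - x) ≤ |m|^p` for `p ≥ 2`. -/
private lemma tangent {p : ℝ} (hp : 2 ≤ p) (x m : ℝ) :
    |x| ^ p + p * |x| ^ (p - 2) * x * (m - x) ≤ |m| ^ p := by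
  rcases lt_trichotomy x 0 with hx | hx | hx
  · have h := tangent_pos hp (show (0:ℝ) < -x by linarith) (m := -m)
    rw [abs_of_neg hx]
    rw [abs_neg] at h
    have hx2 : (-x) ^ (p - 1) = (-x) ^ (p - 2) * (-x) := by
      rw [show p - 1 = (p - 2) + 1 from by ring, Real.rpow_add_one (by linarith : -x ≠ 0)]
    rw [hx2] at h
    calc (-x) ^ p + p * (-x) ^ (p - 2) * x * (m - x)
        = (-x) ^ p + p * ((-x) ^ (p-2) * (-x)) * (-m - -x) := by ring
      _ ≤ |m| ^ p := h
  · subst hx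
    simp only [abs_zero]
    rw [Real.zero_rpow (by linarith : p ≠ 0)]
    have : (0:ℝ) ≤ |m| ^ p := Real.rpow_nonneg (abs_nonneg m) p
    nlinarith
  · have h := tangent_pos hp hx (m := m)
    rw [abs_of_pos hx]
    have hx2 : x ^ (p - 1) = x ^ (p - 2) * x := by
      rw [show p - 1 = (p - 2) + 1 from by ring, Real.rpow_add_one hx.ne']
    rw [hx2] at h
    calc x ^ p + p * x ^ (p - 2) * x * (m - x)
        = x ^ p + p * (x ^ (p-2) * x) * (m - x) := by ring
      _ ≤ |m| ^ p := h

/-- Clarkson-type inequality: `2^{1-p}(|x+y|^p + |x-y|^p) ≤ |x|^p + |y|^p` for `p ≥ 2`. -/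
private lemma clarkson {p : ℝ} (hp : 2 ≤ p) (x y : ℝ) :
    (2:ℝ) ^ (1 - p) * (|x + y| ^ p + |x - y| ^ p) ≤ |x| ^ p + |y| ^ p := by
  set A := |x + y| with hA
  set B := |x - y| with hB
  have hA0 : 0 ≤ A := abs_nonneg _
  have hB0 : 0 ≤ B := abs_nonneg _
  have hq : (1:ℝ) ≤ p / 2 := by linarith
  -- Step 1: A^p + B^p ≤ (A² + B²)^{p/2}
  have e1 : ∀ t : ℝ, 0 ≤ t → t ^ p = (t ^ 2) ^ (p / 2) := by
    intro t ht
    rw [← Real.rpow_natCast t 2, ← Real.rpow_mul ht]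
    congr 1
    push_cast; ring
  have s1 : A ^ p + B ^ p ≤ (A ^ 2 + B ^ 2) ^ (p / 2) := by
    rw [e1 A hA0, e1 B hB0]
    exact rpow_add_rpow_le_rpow_add' (sq_nonneg A) (sq_nonneg B) hq
  -- Step 2: A² + B² = 2x² + 2y²
  have s2 : A ^ 2 + B ^ 2 = 2 * (x ^ 2 + y ^ 2) := by
    rw [hA, hB, sq_abs, sq_abs]; ring
  -- Step 3: (x² + y²)^{p/2} ≤ 2^{p/2 - 1} (|x|^p + |y|^p)
  have s3 : ((x ^ 2 + y ^ 2) / 2) ^ (p / 2) ≤ (|x| ^ p + |y| ^ p) / 2 := by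
    have := rpow_half_add_le (sq_nonneg x) (sq_nonneg y) hq
    rw [← sq_abs x, ← sq_abs y] at this
    rwa [← e1 |x| (abs_nonneg x), ← e1 |y| (abs_nonneg y), sq_abs, sq_abs] at this
  -- combine
  have h2 : (0:ℝ) < 2 := by norm_num
  have key : A ^ p + B ^ p ≤ 2 ^ (p - 1) * (|x| ^ p + |y| ^ p) := by
    calc A ^ p + B ^ p ≤ (A ^ 2 + B ^ 2) ^ (p / 2) := s1
      _ = (2 * (x ^ 2 + y ^ 2)) ^ (p / 2) := by rw [s2]
      _ = ((2 * 2) * ((x ^ 2 + y ^ 2) / 2)) ^ (p / 2) := by ring_nf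
      _ = (2 * 2) ^ (p/2) * ((x ^ 2 + y ^ 2) / 2) ^ (p / 2) := by
          rw [Real.mul_rpow (by norm_num) (by positivity)]
      _ ≤ (2 * 2) ^ (p/2) * ((|x| ^ p + |y| ^ p) / 2) := by
          apply mul_le_mul_of_nonneg_left s3 (Real.rpow_nonneg (by norm_num) _)
      _ = 2 ^ (p - 1) * (|x| ^ p + |y| ^ p) := by
          rw [Real.mul_rpow (by norm_num : (0:ℝ) ≤ 2) (by norm_num : (0:ℝ) ≤ 2),
            ← Real.rpow_add h2, show p / 2 + p / 2 = p from by ring,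
            show p - 1 = p + (-1) from by ring, Real.rpow_add h2, Real.rpow_neg_one]
          ring
  have hc : (0:ℝ) < (2:ℝ) ^ (1 - p) := Real.rpow_pos_of_pos h2 _
  have hmul : (2:ℝ) ^ (1 - p) * (2:ℝ) ^ (p - 1) = 1 := by
    rw [← Real.rpow_add h2]; norm_num
  calc (2:ℝ) ^ (1 - p) * (A ^ p + B ^ p)
      ≤ (2:ℝ) ^ (1 - p) * (2 ^ (p - 1) * (|x| ^ p + |y| ^ p)) :=
        mul_le_mul_of_nonneg_left key hc.le
    _ = ((2:ℝ) ^ (1 - p) * 2 ^ (p - 1)) * (|x| ^ p + |y| ^ p) := by ring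
    _ = |x| ^ p + |y| ^ p := by rw [hmul]; ring

/-- For every real `p ≥ 2` there exists `C = C(p) > 0` such that for all real `a, b`,
`|a - b|^p - |a|^p ≥ -p * |a|^(p-2) * a * b + C * |b|^p`. -/
theorem exists_const_abs_rpow_sub_ge (p : ℝ) (hp : 2 ≤ p) :
    ∃ C : ℝ, 0 < C ∧ ∀ a b : ℝ,
      |a - b| ^ p - |a| ^ p ≥ -p * |a| ^ (p - 2) * a * b + C * |b| ^ p := by
  refine ⟨(2:ℝ) ^ (1 - p), Real.rpow_pos_of_pos (by norm_num) _, fun a b => ?_⟩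
  have hcl := clarkson hp a (a - b)
  rw [mul_add] at hcl
  have htg := tangent hp a ((a + (a - b)) / 2)
  have habs : |(a + (a - b)) / 2| = |a + (a - b)| / 2 := by
    rw [abs_div]; norm_num
  have h2mid : 2 * |(a + (a - b)) / 2| ^ p = (2:ℝ) ^ (1 - p) * |a + (a - b)| ^ p := by
    rw [habs, Real.div_rpow (abs_nonneg _) (by norm_num),
      show (1:ℝ) - p = 1 + (-p) from by ring, Real.rpow_add (by norm_num : (0:ℝ) < 2),
      Real.rpow_one, Real.rpow_neg (by norm_num : (0:ℝ) ≤ 2), div_eq_mul_inv]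
    ring
  have hdist : p * |a| ^ (p - 2) * a * ((a + (a - b)) / 2 - a)
      = (p * |a| ^ (p - 2) * a * (-b)) / 2 := by ring
  rw [hdist] at htg
  have hab : |a - (a - b)| = |b| := by norm_num
  rw [hab] at hcl
  nlinarith [htg, hcl, h2mid]
end

section
/- Let p ≥ 2. If a ≥ 0 and a - b ≥ 0, then (a - b)^p + p·a^{p-1}·b - a^p ≥ |b|^p. -/
open Real

/-- Tangent line inequality: for `q ≥ 1`, `x ≥ 0`, `y > 0`,
`y^q + q*y^(q-1)*(x-y) ≤ x^q`. -/
lemma tangent_rpow (q : ℝ) (hq : 1 ≤ q) {x y : ℝ} (hx : 0 ≤ x) (hy : 0 < y) :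
    y ^ q + q * y ^ (q - 1) * (x - y) ≤ x ^ q := by
  have hs : -1 ≤ x / y - 1 := by
    have : 0 ≤ x / y := div_nonneg hx hy.le
    linarith
  have h := one_add_mul_self_le_rpow_one_add hs hq
  rw [add_sub_cancel] at h
  have hxy : (x / y) ^ q = x ^ q / y ^ q := Real.div_rpow hx hy.le q
  rw [hxy] at h
  have hyq : (0:ℝ) < y ^ q := Real.rpow_pos_of_pos hy q
  have h2 : (1 + q * (x / y - 1)) * y ^ q ≤ x ^ q := by
    calc (1 + q * (x / y - 1)) * y ^ q ≤ (x ^ q / y ^ q) * y ^ q :=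
          mul_le_mul_of_nonneg_right h hyq.le
      _ = x ^ q := div_mul_cancel₀ _ hyq.ne'
  have hy1 : y ^ (q - 1) = y ^ q / y := by
    rw [Real.rpow_sub hy, Real.rpow_one]
  have heq : (1 + q * (x / y - 1)) * y ^ q = y ^ q + q * y ^ (q - 1) * (x - y) := by
    rw [hy1]
    field_simp
  linarith [heq ▸ h2]

lemma rpow_sub_one_mul {x : ℝ} (hx : x ≠ 0) (q : ℝ) : x ^ (q - 1) * x = x ^ q := by
  rw [← Real.rpow_add_one hx, sub_add_cancel]

lemma claimA (p : ℝ) (hp : 2 ≤ p) {a c : ℝ} (ha : 0 ≤ a) (hc : 0 ≤ c) :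
    a ^ p + p * a ^ (p - 1) * c + c ^ p ≤ (a + c) ^ p := by
  have hp0 : p ≠ 0 := by linarith
  rcases eq_or_lt_of_le hc with rfl | hc
  · simp [Real.zero_rpow hp0]
  rcases eq_or_lt_of_le ha with rfl | ha
  · have : p - 1 ≠ 0 := by linarith
    simp [Real.zero_rpow hp0, Real.zero_rpow this]
  -- splits
  have hsplA : a ^ (p - 2) * a = a ^ (p - 1) := by
    rw [show p - 2 = p - 1 - 1 by ring]; exact rpow_sub_one_mul ha.ne' _
  have hsplA2 : a ^ (p - 1) * a = a ^ p := rpow_sub_one_mul ha.ne' p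
  have hsplC : c ^ (p - 2) * c = c ^ (p - 1) := by
    rw [show p - 2 = p - 1 - 1 by ring]; exact rpow_sub_one_mul hc.ne' _
  have hsplC2 : c ^ (p - 1) * c = c ^ p := rpow_sub_one_mul hc.ne' p
  have hsum : (a + c) ^ (p - 1) * (a + c) = (a + c) ^ p :=
    rpow_sub_one_mul (by positivity) p
  have hq : (1:ℝ) ≤ p - 1 := by linarith
  have hA2 : (0:ℝ) < a ^ (p - 2) := Real.rpow_pos_of_pos ha _
  have hC2 : (0:ℝ) < c ^ (p - 2) := Real.rpow_pos_of_pos hc _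
  rcases le_total c a with hca | hca
  · -- tangent at a
    have ht := tangent_rpow (p - 1) hq (x := a + c) (by positivity) ha
    rw [add_sub_cancel_left, show p - 1 - 1 = p - 2 by ring] at ht
    have hmul : (a ^ (p - 1) + (p - 1) * a ^ (p - 2) * c) * (a + c)
        ≤ (a + c) ^ (p - 1) * (a + c) := by
      apply mul_le_mul_of_nonneg_right ht (by positivity)
    rw [hsum] at hmul
    have hcp : c ^ (p - 2) ≤ a ^ (p - 2) :=
      Real.rpow_le_rpow hc.le hca (by linarith)
    have hcc : c ^ (p - 2) * (c * c) ≤ a ^ (p - 2) * (c * c) :=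
      mul_le_mul_of_nonneg_right hcp (by positivity)
    have f2 : c ^ (p - 2) * (c * c) = c ^ p := by
      rw [← mul_assoc, hsplC, hsplC2]
    have expand : (a ^ (p - 1) + (p - 1) * a ^ (p - 2) * c) * (a + c)
        = a ^ p + p * a ^ (p - 1) * c + (p - 1) * (a ^ (p - 2) * (c * c)) := by
      rw [← hsplA2, ← hsplA]; ring
    rw [expand] at hmul
    have hkey : c ^ p ≤ (p - 1) * (a ^ (p - 2) * (c * c)) := by
      rw [← f2]
      calc c ^ (p - 2) * (c * c) ≤ a ^ (p - 2) * (c * c) := hcc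
        _ ≤ (p - 1) * (a ^ (p - 2) * (c * c)) :=
            le_mul_of_one_le_left (by positivity) (by linarith)
    linarith
  · -- tangent at c
    have ht := tangent_rpow (p - 1) hq (x := a + c) (by positivity) hc
    rw [show a + c - c = a by ring, show p - 1 - 1 = p - 2 by ring] at ht
    have hmul : (c ^ (p - 1) + (p - 1) * c ^ (p - 2) * a) * (a + c)
        ≤ (a + c) ^ (p - 1) * (a + c) := by
      apply mul_le_mul_of_nonneg_right ht (by positivity)
    rw [hsum] at hmul
    have hac : a ^ (p - 2) ≤ c ^ (p - 2) :=
      Real.rpow_le_rpow ha.le hca (by linarith)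
    have e1 : a ^ (p - 2) * (a * c) ≤ c ^ (p - 2) * (a * c) :=
      mul_le_mul_of_nonneg_right hac (by positivity)
    have e2 : a ^ (p - 2) * (a * a) ≤ c ^ (p - 2) * (a * a) :=
      mul_le_mul_of_nonneg_right hac (by positivity)
    have expand : (c ^ (p - 1) + (p - 1) * c ^ (p - 2) * a) * (a + c)
        = c ^ p + p * (c ^ (p - 2) * (a * c)) + (p - 1) * (c ^ (p - 2) * (a * a)) := by
      rw [← hsplC2, ← hsplC]; ring
    rw [expand] at hmul
    have k1 : a ^ p ≤ (p - 1) * (c ^ (p - 2) * (a * a)) := by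
      calc a ^ p = a ^ (p - 2) * (a * a) := by rw [← mul_assoc, hsplA, hsplA2]
        _ ≤ c ^ (p - 2) * (a * a) := e2
        _ ≤ (p - 1) * (c ^ (p - 2) * (a * a)) :=
            le_mul_of_one_le_left (by positivity) (by linarith)
    have k2 : p * a ^ (p - 1) * c ≤ p * (c ^ (p - 2) * (a * c)) := by
      have : a ^ (p - 1) * c = a ^ (p - 2) * (a * c) := by
        rw [← hsplA]; ring
      rw [mul_assoc, this]
      exact mul_le_mul_of_nonneg_left e1 (by linarith)
    linarith

lemma claimB (p : ℝ) (hp : 2 ≤ p) {a b : ℝ} (hb : 0 ≤ b) (hba : b ≤ a) :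
    a ^ p + b ^ p ≤ (a - b) ^ p + p * a ^ (p - 1) * b := by
  have hp0 : p ≠ 0 := by linarith
  rcases eq_or_lt_of_le hb with rfl | hb
  · simp [Real.zero_rpow hp0]
  have ha : 0 < a := lt_of_lt_of_le hb hba
  have hsplA : a ^ (p - 2) * a = a ^ (p - 1) := by
    rw [show p - 2 = p - 1 - 1 by ring]; exact rpow_sub_one_mul ha.ne' _
  have hsplA2 : a ^ (p - 1) * a = a ^ p := rpow_sub_one_mul ha.ne' p
  have hq : (1:ℝ) ≤ p - 1 := by linarith
  have ht := tangent_rpow (p - 1) hq (x := a - b) (by linarith) ha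
  rw [show a - b - a = -b by ring, show p - 1 - 1 = p - 2 by ring] at ht
  have hmul : (a ^ (p - 1) + (p - 1) * a ^ (p - 2) * (-b)) * (a - b)
      ≤ (a - b) ^ (p - 1) * (a - b) := by
    apply mul_le_mul_of_nonneg_right ht (by linarith)
  have hsum : (a - b) ^ (p - 1) * (a - b) = (a - b) ^ p := by
    rcases eq_or_lt_of_le (show (0:ℝ) ≤ a - b by linarith) with h0 | h0
    · rw [← h0]; simp [Real.zero_rpow hp0, Real.zero_rpow (show p - 1 ≠ 0 by linarith)]
    · exact rpow_sub_one_mul h0.ne' p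
  rw [hsum] at hmul
  have hbp : b ^ (p - 2) ≤ a ^ (p - 2) :=
    Real.rpow_le_rpow hb.le hba (by linarith)
  have hsplB : b ^ (p - 2) * b = b ^ (p - 1) := by
    rw [show p - 2 = p - 1 - 1 by ring]; exact rpow_sub_one_mul hb.ne' _
  have hsplB2 : b ^ (p - 1) * b = b ^ p := rpow_sub_one_mul hb.ne' p
  have hbb : b ^ (p - 2) * (b * b) ≤ a ^ (p - 2) * (b * b) :=
    mul_le_mul_of_nonneg_right hbp (by positivity)
  have hA2 : (0:ℝ) < a ^ (p - 2) := Real.rpow_pos_of_pos ha _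
  have expand : (a ^ (p - 1) + (p - 1) * a ^ (p - 2) * -b) * (a - b)
      = a ^ p - p * a ^ (p - 1) * b + (p - 1) * (a ^ (p - 2) * (b * b)) := by
    rw [← hsplA2, ← hsplA]; ring
  rw [expand] at hmul
  have hkey : b ^ p ≤ (p - 1) * (a ^ (p - 2) * (b * b)) := by
    calc b ^ p = b ^ (p - 2) * (b * b) := by rw [← mul_assoc, hsplB, hsplB2]
      _ ≤ a ^ (p - 2) * (b * b) := hbb
      _ ≤ (p - 1) * (a ^ (p - 2) * (b * b)) :=
          le_mul_of_one_le_left (by positivity) (by linarith)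
  linarith

/-- If `p ≥ 2`, `a ≥ 0` and `a - b ≥ 0`, then
`(a - b)^p + p * a^(p-1) * b - a^p ≥ |b|^p`. -/
theorem rpow_sub_add_ge_abs_rpow (p : ℝ) (hp : 2 ≤ p) (a b : ℝ)
    (ha : 0 ≤ a) (hab : 0 ≤ a - b) :
    (a - b) ^ p + p * a ^ (p - 1) * b - a ^ p ≥ |b| ^ p := by
  rcases le_total b 0 with hb | hb
  · rw [abs_of_nonpos hb]
    have h := claimA p hp ha (show 0 ≤ -b by linarith)
    rw [show a + -b = a - b by ring] at h
    linarith
  · rw [abs_of_nonneg hb]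
    have h := claimB p hp (a := a) hb (by linarith)
    linarith
end

section
/- Let Q ≥ 2 be a natural number, let q > 0 and let -1 < L < Q - 2. Then for every continuously differentiable function v : [0,1] → ℝ with v(1) = 0, one has ∫₀¹ |v(s)|^q s^L ds ≤ (∫₀¹ |v'(s)|^Q s^{Q-1} ds)^{q/Q} · ∫₀¹ s^L (log(1/s))^{q(Q-1)/Q} ds. -/
open MeasureTheory

/-- For `Q ≥ 2` a natural number, `q > 0`, `-1 < L < Q - 2`, and every
continuously differentiable `v : [0,1] → ℝ` with `v 1 = 0`,
`∫₀¹ |v(s)|^q s^L ds ≤ (∫₀¹ |v'(s)|^Q s^(Q-1) ds)^(q/Q) * ∫₀¹ s^L (log(1/s))^(q(Q-1)/Q) ds`. -/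
theorem weighted_interpolation_inequality (Q : ℕ) (hQ : 2 ≤ Q)
    (q L : ℝ) (hq : 0 < q) (hL : -1 < L) (hL' : L < (Q : ℝ) - 2)
    (v : ℝ → ℝ) (hv : ContDiffOn ℝ 1 v (Set.Icc 0 1)) (hv1 : v 1 = 0) :
    ∫ s in Set.Ioo (0 : ℝ) 1, |v s| ^ q * s ^ L
      ≤ (∫ s in Set.Ioo (0 : ℝ) 1,
            |derivWithin v (Set.Icc 0 1) s| ^ (Q : ℝ) * s ^ ((Q : ℝ) - 1)) ^ (q / (Q : ℝ))
        * ∫ s in Set.Ioo (0 : ℝ) 1,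
            s ^ L * (Real.log (1 / s)) ^ (q * ((Q : ℝ) - 1) / (Q : ℝ)) := by
  have hQ2 : (2:ℝ) ≤ (Q:ℝ) := by exact_mod_cast hQ
  have hQ1 : (1:ℝ) < (Q:ℝ) := by linarith
  have hQ0 : (0:ℝ) < (Q:ℝ) := by linarith
  have hQ0' : (Q:ℝ) ≠ 0 := hQ0.ne'
  have hQm1 : (0:ℝ) < (Q:ℝ) - 1 := by linarith
  set F : ℝ → ℝ := derivWithin v (Set.Icc 0 1) with hF
  set D : ℝ → ℝ := fun t => |F t| with hDdef
  have hFc : ContinuousOn F (Set.Icc 0 1) :=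
    hv.continuousOn_derivWithin (uniqueDiffOn_Icc one_pos) le_rfl
  have hDcont : ContinuousOn D (Set.Icc 0 1) := hFc.abs
  obtain ⟨C, hC⟩ := isCompact_Icc.exists_bound_of_continuousOn hDcont
  set θ : ℝ := ((Q:ℝ) - 1) / (Q:ℝ) with hθdef
  have hθ : 0 < θ := div_pos hQm1 hQ0
  set A : ℝ := ∫ t in Set.Ioo (0:ℝ) 1, D t ^ (Q:ℝ) * t ^ ((Q:ℝ) - 1) with hAdef
  -- integrability of the integrand of A
  have hcontpow : Continuous (fun t : ℝ => t ^ ((Q:ℝ) - 1)) :=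
    Real.continuous_rpow_const hQm1.le
  have hAcont : ContinuousOn (fun t : ℝ => D t ^ (Q:ℝ) * t ^ ((Q:ℝ) - 1)) (Set.Icc 0 1) :=
    ((Real.continuous_rpow_const hQ0.le).comp_continuousOn hDcont).mul hcontpow.continuousOn
  have hAint : IntegrableOn (fun t : ℝ => D t ^ (Q:ℝ) * t ^ ((Q:ℝ) - 1)) (Set.Ioo 0 1) :=
    (hAcont.integrableOn_Icc).mono_set Set.Ioo_subset_Icc_self
  have hAintnonneg : ∀ t : ℝ, t ∈ Set.Ioo (0:ℝ) 1 → 0 ≤ D t ^ (Q:ℝ) * t ^ ((Q:ℝ) - 1) :=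
    fun t _ => mul_nonneg (Real.rpow_nonneg (abs_nonneg _) _) (Real.rpow_nonneg
      (le_of_lt (by exact (by assumption : t ∈ Set.Ioo (0:ℝ) 1).1)) _)
  have hA0 : 0 ≤ A :=
    setIntegral_nonneg measurableSet_Ioo hAintnonneg
  -- Key pointwise bound
  have key : ∀ s ∈ Set.Ioo (0:ℝ) 1,
      |v s| ≤ A ^ (1 / (Q:ℝ)) * (Real.log (1 / s)) ^ θ := by
    rintro s ⟨hs0, hs1⟩
    have hsub : Set.Icc s 1 ⊆ Set.Icc 0 1 := Set.Icc_subset_Icc hs0.le le_rfl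
    have hsub' : Set.Ioo s 1 ⊆ Set.Icc 0 1 :=
      fun t ht => ⟨(hs0.trans ht.1).le, ht.2.le⟩
    -- FTC
    have hderiv : ∀ x ∈ Set.Ioo s 1, HasDerivAt v (F x) x := by
      intro x hx
      have hx0 : 0 < x := hs0.trans hx.1
      have hmem : Set.Icc (0:ℝ) 1 ∈ nhds x := Icc_mem_nhds hx0 hx.2
      exact (((hv.differentiableOn one_ne_zero) x ⟨hx0.le, hx.2.le⟩).hasDerivWithinAt).hasDerivAt hmem
    have hFint : IntervalIntegrable F volume s 1 := by
      apply (hFc.mono hsub).intervalIntegrable_of_Icc hs1.le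
    have hftc : ∫ t in s..1, F t = v 1 - v s :=
      intervalIntegral.integral_eq_sub_of_hasDerivAt_of_le hs1.le
        (hv.continuousOn.mono hsub) hderiv hFint
    have h1 : |v s| ≤ ∫ t in s..1, |F t| := by
      have h := intervalIntegral.abs_integral_le_integral_abs (f := F) (a := s) (b := 1) (μ := volume) hs1.le
      rw [hftc, hv1, zero_sub, abs_neg] at h
      exact h
    have h1' : ∫ t in s..1, |F t| = ∫ t in Set.Ioo s 1, D t := by
      rw [intervalIntegral.integral_of_le hs1.le, integral_Ioc_eq_integral_Ioo]
    -- Hölder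
    set f : ℝ → ℝ := fun t => D t * t ^ θ with hfdef
    set g : ℝ → ℝ := fun t => t ^ (-θ) with hgdef
    have hfg : Set.EqOn D (fun t => f t * g t) (Set.Ioo s 1) := by
      intro t ht
      have ht0 : 0 < t := hs0.trans ht.1
      simp only [hfdef, hgdef, mul_assoc, ← Real.rpow_add ht0, add_neg_cancel,
        Real.rpow_zero, mul_one]
    haveI : Fact (volume (Set.Ioo s 1) < ⊤) := ⟨measure_Ioo_lt_top⟩
    have hfm : AEStronglyMeasurable f (volume.restrict (Set.Ioo s 1)) :=
      (ContinuousOn.mul (hDcont.mono hsub') (Real.continuous_rpow_const hθ.le).continuousOn).aestronglyMeasurable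
        measurableSet_Ioo
    have hgm : AEStronglyMeasurable g (volume.restrict (Set.Ioo s 1)) := by
      refine (ContinuousOn.aestronglyMeasurable ?_ measurableSet_Ioo)
      intro t ht
      exact (Real.continuousAt_rpow_const t (-θ) (Or.inl (hs0.trans ht.1).ne')).continuousWithinAt
    have hfbd : ∀ᵐ t ∂(volume.restrict (Set.Ioo s 1)), ‖f t‖ ≤ max C 0 := by
      filter_upwards [ae_restrict_mem measurableSet_Ioo] with t ht
      have ht0 : 0 < t := hs0.trans ht.1
      have h1t : t ^ θ ≤ 1 := Real.rpow_le_one ht0.le ht.2.le hθ.le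
      have hDt : D t ≤ max C 0 := by
        have := hC t (hsub' ht)
        calc D t ≤ ‖D t‖ := le_abs_self _
          _ ≤ C := this
          _ ≤ max C 0 := le_max_left _ _
      have hfnn : 0 ≤ f t := mul_nonneg (abs_nonneg _) (Real.rpow_nonneg ht0.le _)
      rw [Real.norm_eq_abs, abs_of_nonneg hfnn]
      calc D t * t ^ θ ≤ max C 0 * 1 :=
            mul_le_mul hDt h1t (Real.rpow_nonneg ht0.le _) (le_max_right _ _)
        _ = max C 0 := mul_one _
    have hgbd : ∀ᵐ t ∂(volume.restrict (Set.Ioo s 1)), ‖g t‖ ≤ s ^ (-θ) := by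
      filter_upwards [ae_restrict_mem measurableSet_Ioo] with t ht
      have ht0 : 0 < t := hs0.trans ht.1
      rw [Real.norm_eq_abs, abs_of_nonneg (Real.rpow_nonneg ht0.le _)]
      exact Real.rpow_le_rpow_of_nonpos hs0 ht.1.le (neg_nonpos.mpr hθ.le)
    have hconj : ((Q:ℝ)).HolderConjugate ((Q:ℝ) / ((Q:ℝ) - 1)) :=
      Real.HolderConjugate.conjExponent hQ1
    have hfLp : MemLp f (ENNReal.ofReal (Q:ℝ)) (volume.restrict (Set.Ioo s 1)) :=
      MemLp.of_bound hfm _ hfbd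
    have hgLp : MemLp g (ENNReal.ofReal ((Q:ℝ) / ((Q:ℝ) - 1))) (volume.restrict (Set.Ioo s 1)) :=
      MemLp.of_bound hgm _ hgbd
    have hfnn : 0 ≤ᵐ[volume.restrict (Set.Ioo s 1)] f := by
      filter_upwards [ae_restrict_mem measurableSet_Ioo] with t ht
      exact mul_nonneg (abs_nonneg _) (Real.rpow_nonneg (hs0.trans ht.1).le _)
    have hgnn : 0 ≤ᵐ[volume.restrict (Set.Ioo s 1)] g := by
      filter_upwards [ae_restrict_mem measurableSet_Ioo] with t ht
      exact Real.rpow_nonneg (hs0.trans ht.1).le _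
    have hold := integral_mul_le_Lp_mul_Lq_of_nonneg hconj hfnn hgnn hfLp hgLp
    -- identify the two factors
    have e2 : ∫ t in Set.Ioo s 1, f t ^ (Q:ℝ)
        = ∫ t in Set.Ioo s 1, D t ^ (Q:ℝ) * t ^ ((Q:ℝ) - 1) := by
      refine setIntegral_congr_fun measurableSet_Ioo ?_
      intro t ht
      have ht0 : 0 < t := hs0.trans ht.1
      show (D t * t ^ θ) ^ (Q:ℝ) = _
      have hθQ : θ * (Q:ℝ) = (Q:ℝ) - 1 := by
        rw [hθdef]; field_simp
      rw [Real.mul_rpow (abs_nonneg _) (Real.rpow_nonneg ht0.le _),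
        ← Real.rpow_mul ht0.le, hθQ]
    have e3 : ∫ t in Set.Ioo s 1, f t ^ (Q:ℝ) ≤ A := by
      rw [e2, hAdef]
      exact setIntegral_mono_set hAint
        ((ae_restrict_mem measurableSet_Ioo).mono fun t ht => hAintnonneg t ht)
        ((Set.Ioo_subset_Ioo hs0.le le_rfl).eventuallyLE)
    have e4 : ∫ t in Set.Ioo s 1, g t ^ ((Q:ℝ) / ((Q:ℝ) - 1)) = Real.log (1 / s) := by
      have heq : Set.EqOn (fun t => g t ^ ((Q:ℝ) / ((Q:ℝ) - 1))) (fun t : ℝ => t⁻¹)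
          (Set.Ioo s 1) := by
        intro t ht
        have ht0 : 0 < t := hs0.trans ht.1
        show (t ^ (-θ)) ^ ((Q:ℝ) / ((Q:ℝ) - 1)) = _
        rw [← Real.rpow_mul ht0.le]
        have : -θ * ((Q:ℝ) / ((Q:ℝ) - 1)) = -1 := by
          rw [hθdef]; field_simp
        rw [this, Real.rpow_neg_one]
      rw [setIntegral_congr_fun measurableSet_Ioo heq, ← integral_Ioc_eq_integral_Ioo,
        ← intervalIntegral.integral_of_le hs1.le, integral_inv_of_pos hs0 one_pos]
    have hfQnn : 0 ≤ ∫ t in Set.Ioo s 1, f t ^ (Q:ℝ) :=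
      setIntegral_nonneg measurableSet_Ioo fun t ht =>
        Real.rpow_nonneg (mul_nonneg (abs_nonneg _) (Real.rpow_nonneg (hs0.trans ht.1).le _)) _
    have hloginv : 0 ≤ Real.log (1 / s) :=
      Real.log_nonneg (one_le_one_div hs0 hs1.le)
    have hfactor1 : (∫ t in Set.Ioo s 1, f t ^ (Q:ℝ)) ^ (1 / (Q:ℝ)) ≤ A ^ (1 / (Q:ℝ)) :=
      Real.rpow_le_rpow hfQnn e3 (by positivity)
    have hexp2 : 1 / ((Q:ℝ) / ((Q:ℝ) - 1)) = θ := by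
      rw [hθdef]; field_simp
    calc |v s| ≤ ∫ t in s..1, |F t| := h1
      _ = ∫ t in Set.Ioo s 1, D t := h1'
      _ = ∫ t in Set.Ioo s 1, f t * g t := setIntegral_congr_fun measurableSet_Ioo hfg
      _ ≤ (∫ t in Set.Ioo s 1, f t ^ (Q:ℝ)) ^ (1 / (Q:ℝ))
          * (∫ t in Set.Ioo s 1, g t ^ ((Q:ℝ) / ((Q:ℝ) - 1))) ^ (1 / ((Q:ℝ) / ((Q:ℝ) - 1))) :=
          hold
      _ = (∫ t in Set.Ioo s 1, f t ^ (Q:ℝ)) ^ (1 / (Q:ℝ)) * (Real.log (1 / s)) ^ θ := by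
          rw [e4, hexp2]
      _ ≤ A ^ (1 / (Q:ℝ)) * (Real.log (1 / s)) ^ θ :=
          mul_le_mul_of_nonneg_right hfactor1 (Real.rpow_nonneg hloginv _)
  -- integrability of the weight
  set α : ℝ := q * ((Q:ℝ) - 1) / (Q:ℝ) with hαdef
  have hα : 0 < α := by
    apply div_pos (mul_pos hq hQm1) hQ0
  have hWint : IntegrableOn (fun s : ℝ => s ^ L * Real.log (1 / s) ^ α) (Set.Ioo 0 1) := by
    set ε : ℝ := (L + 1) / 2 with hεdef
    have hε : 0 < ε := by rw [hεdef]; linarith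
    set δ : ℝ := ε / α with hδdef
    have hδ : 0 < δ := div_pos hε hα
    have hmeas : AEStronglyMeasurable (fun s : ℝ => s ^ L * Real.log (1 / s) ^ α)
        (volume.restrict (Set.Ioo 0 1)) := by
      refine ContinuousOn.aestronglyMeasurable ?_ measurableSet_Ioo
      apply ContinuousOn.mul
      · intro s hs
        exact (Real.continuousAt_rpow_const s L (Or.inl hs.1.ne')).continuousWithinAt
      · apply (Real.continuous_rpow_const hα.le).comp_continuousOn
        intro s hs
        exact ((Real.continuousAt_log (one_div_pos.mpr hs.1).ne').comp
          (continuousAt_const.div continuousAt_id hs.1.ne')).continuousWithinAt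
    have hdom : IntegrableOn (fun s : ℝ => δ ^ (-α) * s ^ (L - ε)) (Set.Ioo 0 1) := by
      refine Integrable.const_mul ?_ _
      refine (intervalIntegral.integrableOn_Ioo_rpow_iff one_pos).2 ?_
      rw [hεdef]; linarith
    refine Integrable.mono' hdom hmeas ?_
    filter_upwards [ae_restrict_mem measurableSet_Ioo] with s hs
    have hs0 : 0 < s := hs.1
    have hlog0 : 0 ≤ Real.log (1 / s) :=
      Real.log_nonneg (one_le_one_div hs0 hs.2.le)
    rw [Real.norm_eq_abs, abs_of_nonneg (mul_nonneg (Real.rpow_nonneg hs0.le _)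
      (Real.rpow_nonneg hlog0 _))]
    have hlogle : Real.log (1 / s) ≤ (1 / s) ^ δ / δ :=
      Real.log_le_rpow_div (by positivity) hδ
    have h2 : Real.log (1 / s) ^ α ≤ ((1 / s) ^ δ / δ) ^ α :=
      Real.rpow_le_rpow hlog0 hlogle hα.le
    have h3 : ((1 / s) ^ δ / δ) ^ α = δ ^ (-α) * s ^ (-ε) := by
      rw [Real.div_rpow (Real.rpow_nonneg (by positivity) _) hδ.le,
        ← Real.rpow_mul (by positivity : (0:ℝ) ≤ 1 / s)]
      have hδα : δ * α = ε := by rw [hδdef]; field_simp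
      rw [hδα, one_div, Real.inv_rpow hs0.le, ← Real.rpow_neg hs0.le,
        div_eq_mul_inv, ← Real.rpow_neg hδ.le, mul_comm]
    calc s ^ L * Real.log (1 / s) ^ α ≤ s ^ L * (δ ^ (-α) * s ^ (-ε)) := by
          rw [← h3]
          exact mul_le_mul_of_nonneg_left h2 (Real.rpow_nonneg hs0.le _)
      _ = δ ^ (-α) * s ^ (L - ε) := by
          rw [sub_eq_add_neg, Real.rpow_add hs0]
          ring
    -- done
  -- final estimate
  have hbound : ∀ᵐ s ∂(volume.restrict (Set.Ioo (0:ℝ) 1)),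
      |v s| ^ q * s ^ L ≤ A ^ (q / (Q:ℝ)) * (s ^ L * Real.log (1 / s) ^ α) := by
    filter_upwards [ae_restrict_mem measurableSet_Ioo] with s hs
    have hs0 : 0 < s := hs.1
    have hlog0 : 0 ≤ Real.log (1 / s) :=
      Real.log_nonneg (one_le_one_div hs0 hs.2.le)
    have hk := key s hs
    have h1 : |v s| ^ q ≤ (A ^ (1 / (Q:ℝ)) * Real.log (1 / s) ^ θ) ^ q :=
      Real.rpow_le_rpow (abs_nonneg _) hk hq.le
    have h2 : (A ^ (1 / (Q:ℝ)) * Real.log (1 / s) ^ θ) ^ q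
        = A ^ (q / (Q:ℝ)) * Real.log (1 / s) ^ α := by
      rw [Real.mul_rpow (Real.rpow_nonneg hA0 _) (Real.rpow_nonneg hlog0 _),
        ← Real.rpow_mul hA0, ← Real.rpow_mul hlog0]
      congr 1
      · congr 1; field_simp
      · congr 1; rw [hθdef, hαdef]; field_simp
    calc |v s| ^ q * s ^ L
        ≤ (A ^ (q / (Q:ℝ)) * Real.log (1 / s) ^ α) * s ^ L := by
          rw [← h2]
          exact mul_le_mul_of_nonneg_right h1 (Real.rpow_nonneg hs0.le _)
      _ = A ^ (q / (Q:ℝ)) * (s ^ L * Real.log (1 / s) ^ α) := by ring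
  have hnn : 0 ≤ᵐ[volume.restrict (Set.Ioo (0:ℝ) 1)] fun s => |v s| ^ q * s ^ L := by
    filter_upwards [ae_restrict_mem measurableSet_Ioo] with s hs
    exact mul_nonneg (Real.rpow_nonneg (abs_nonneg _) _) (Real.rpow_nonneg hs.1.le _)
  calc ∫ s in Set.Ioo (0:ℝ) 1, |v s| ^ q * s ^ L
      ≤ ∫ s in Set.Ioo (0:ℝ) 1, A ^ (q / (Q:ℝ)) * (s ^ L * Real.log (1 / s) ^ α) :=
        integral_mono_of_nonneg hnn (hWint.const_mul _) hbound
    _ = A ^ (q / (Q:ℝ)) * ∫ s in Set.Ioo (0:ℝ) 1, s ^ L * Real.log (1 / s) ^ α :=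
        MeasureTheory.integral_const_mul _ _
end

section
/- Let Q ≥ 2 and let u : (0,R) → ℝ be smooth and compactly supported in (0,R). Define v(s) = (log(R/r))^{−(Q−1)/Q} u(r) where s = (log(R/r))^{−1}. Then ∫₀^R |u'(r)|^Q r^{Q−1} dr − ((Q−1)/Q)^Q ∫₀^R |u(r)|^Q / (r (log(R/r))^Q) dr ≥ C ∫₀^∞ |v'(s)|^Q s^{Q−1} ds, where C = C(Q) > 0 is the constant from the inequality |a−b|^Q − |a|^Q ≥ −Q|a|^{Q−2}ab + C|b|^Q. -/
open MeasureTheory Set Real Topology Filter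

lemma myHasDerivAt_abs_rpow {p : ℝ} (hp : 2 ≤ p) (x : ℝ) :
    HasDerivAt (fun y : ℝ => |y| ^ p) (p * |x| ^ (p - 2) * x) x := by
  rcases eq_or_ne x 0 with rfl | hx
  · rw [abs_zero, mul_zero]
    rw [hasDerivAt_iff_tendsto_slope]
    have hcont : Tendsto (fun y : ℝ => |y| ^ (p - 1)) (𝓝[≠] (0:ℝ)) (𝓝 0) := by
      have : Continuous (fun y : ℝ => |y| ^ (p - 1)) :=
        (Real.continuous_rpow_const (by linarith)).comp continuous_abs
      have h0 : |(0:ℝ)| ^ (p - 1) = 0 := by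
        rw [abs_zero, Real.zero_rpow (by linarith)]
      have h0' : (0:ℝ) ^ (p - 1) = 0 := Real.zero_rpow (by linarith)
      simpa [h0, h0'] using (this.tendsto 0).mono_left nhdsWithin_le_nhds
    apply squeeze_zero_norm' _ hcont
    filter_upwards [self_mem_nhdsWithin] with y hy
    have hy0 : y ≠ 0 := hy
    have : slope (fun y : ℝ => |y| ^ p) 0 y = |y| ^ p / y := by
      simp [slope_def_field, abs_zero, Real.zero_rpow (by linarith : p ≠ 0)]
    rw [this]
    rw [Real.norm_eq_abs, abs_div, Real.abs_rpow_of_nonneg (abs_nonneg y), abs_abs]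
    rw [div_le_iff₀ (abs_pos.mpr hy0)]
    rw [← Real.rpow_add_one (abs_ne_zero.mpr hy0)]
    ring_nf
    exact le_rfl
  · have h1 : HasDerivAt (fun y : ℝ => |y|) (SignType.sign x : ℝ) x := hasDerivAt_abs hx
    have h2 : HasDerivAt (fun z : ℝ => z ^ p) (p * |x| ^ (p - 1)) |x| := by
      simpa using Real.hasDerivAt_rpow_const (p := p) (Or.inl (abs_ne_zero.mpr hx))
    have := h2.comp x h1
    refine this.congr_deriv ?_
    have : |x| ^ (p - 1) = |x| ^ (p - 2) * |x| := by
      rw [← Real.rpow_add_one (abs_ne_zero.mpr hx)]; ring_nf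
    rw [this]
    rcases hx.lt_or_gt with h | h
    · simp [sign_neg h, abs_of_neg h]; ring
    · simp [sign_pos h, abs_of_pos h]; ring

lemma myAbs_rpow_sub_two {p : ℝ} (hp : 2 ≤ p) (x : ℝ) :
    |x| ^ (p - 2) * x * x = |x| ^ p := by
  rcases eq_or_ne x 0 with rfl | hx
  · simp [Real.zero_rpow (show p ≠ 0 by linarith)]
  · have h2 : |x| ^ (2:ℝ) = x * x := by
      rw [show (2:ℝ) = ((2:ℕ):ℝ) by norm_num, Real.rpow_natCast, sq_abs, sq]
    have h3 : |x| ^ (p-2) * x * x = |x| ^ (p-2) * |x| ^ (2:ℝ) := by rw [h2]; ring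
    rw [h3, ← Real.rpow_add (abs_pos.mpr hx)]; norm_num

lemma myIntegrableOn (Rr c d : ℝ) (f : ℝ → ℝ) (hcd : Icc c d ⊆ Ioo 0 Rr)
    (hf : ContinuousOn f (Ioo 0 Rr)) (h0 : ∀ r ∈ Ioo 0 Rr \ Icc c d, f r = 0) :
    IntegrableOn f (Ioo 0 Rr) volume := by
  have h1 : IntegrableOn f (Icc c d) volume :=
    (hf.mono hcd).integrableOn_compact isCompact_Icc
  have h2 : IntegrableOn f (Ioo 0 Rr \ Icc c d) volume := by
    apply IntegrableOn.congr_fun integrableOn_zero _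
      (measurableSet_Ioo.diff measurableSet_Icc)
    intro x hx; exact (h0 x hx).symm
  have h3 : Ioo 0 Rr = Icc c d ∪ (Ioo 0 Rr \ Icc c d) := (union_diff_cancel hcd).symm
  rw [h3]
  exact h1.union h2

set_option maxHeartbeats 2000000 in
/-- One-dimensional core of the stability of the critical Hardy inequality:
for `Q ≥ 2`, `u` smooth compactly supported in `(0,R)`, with
`v(s) = (log(R/r))^(-(Q-1)/Q) u(r)` under `s = (log(R/r))⁻¹` (i.e. `r = R e^(-1/s)`),
the critical Hardy deficit dominates `C ∫₀^∞ |v'(s)|^Q s^(Q-1) ds`, where `C > 0`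
is any constant from the convexity inequality
`|a-b|^Q - |a|^Q ≥ -Q|a|^(Q-2) a b + C |b|^Q`. -/
theorem critical_hardy_deficit_dominates (Q : ℕ) (hQ : 2 ≤ Q) (R : ℝ) (hR : 0 < R)
    (u : ℝ → ℝ) (hu : ContDiff ℝ (⊤ : ℕ∞) u) (husupp : HasCompactSupport u)
    (hsupp : tsupport u ⊆ Set.Ioo 0 R)
    (C : ℝ) (hC : 0 < C)
    (hCineq : ∀ a b : ℝ,
      |a - b| ^ (Q : ℝ) - |a| ^ (Q : ℝ)
        ≥ -(Q : ℝ) * |a| ^ ((Q : ℝ) - 2) * a * b + C * |b| ^ (Q : ℝ)) :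
    (∫ r in Set.Ioo (0 : ℝ) R, |deriv u r| ^ (Q : ℝ) * r ^ ((Q : ℝ) - 1))
      - (((Q : ℝ) - 1) / Q) ^ (Q : ℝ) *
          (∫ r in Set.Ioo (0 : ℝ) R,
            |u r| ^ (Q : ℝ) / (r * (Real.log (R / r)) ^ (Q : ℝ)))
    ≥ C * ∫ s in Set.Ioi (0 : ℝ),
        |deriv (fun s : ℝ => s ^ (((Q : ℝ) - 1) / Q) * u (R * Real.exp (-1 / s))) s| ^ (Q : ℝ)
          * s ^ ((Q : ℝ) - 1) := by
  classical
  have hp2 : (2:ℝ) ≤ (Q:ℝ) := by exact_mod_cast hQ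
  set p : ℝ := (Q:ℝ) with hpdef
  have hQ0 : (0:ℝ) < p := by linarith
  have hQne : p ≠ 0 := ne_of_gt hQ0
  set k : ℝ := (p - 1)/p with hkdef
  have hk0 : 0 < k := div_pos (by linarith) hQ0
  have hkp : k * p = p - 1 := div_mul_cancel₀ _ hQne
  set L : ℝ → ℝ := fun r => Real.log (R / r) with hLdef
  set A : ℝ → ℝ := fun r => -(k * u r / (r ^ (1/p) * L r)) with hAdef
  set B : ℝ → ℝ := fun r => A r - deriv u r * r ^ k with hBdef
  set G : ℝ → ℝ := fun r => -p * |A r| ^ (p-2) * A r * B r with hGdef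
  set F : ℝ → ℝ := fun r => -(k^(p-1)) * (|u r| ^ p * (L r) ^ (1-p)) with hFdef
  -- basic facts
  have hucont : Continuous u := hu.continuous
  have hu'cont : Continuous (deriv u) := hu.continuous_deriv (by simp)
  have hudiff : ∀ x, HasDerivAt u (deriv u x) x :=
    fun x => (hu.differentiable (by simp) x).hasDerivAt
  have hu0 : ∀ r ∉ tsupport u, u r = 0 := fun r hr => image_eq_zero_of_notMem_tsupport hr
  have hderiv0 : ∀ r ∉ tsupport u, deriv u r = 0 := by
    intro r hr
    by_contra h
    exact hr (support_deriv_subset (by simpa [Function.mem_support] using h))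
  have hLpos : ∀ r ∈ Ioo (0:ℝ) R, 0 < L r := by
    intro r hr
    exact Real.log_pos ((one_lt_div hr.1).mpr hr.2)
  have hLca : ∀ x ∈ Ioo (0:ℝ) R, ContinuousAt L x := by
    intro x hx
    exact (Real.continuousAt_log (ne_of_gt (div_pos hR hx.1))).comp
      (continuousAt_const.div continuousAt_id hx.1.ne')
  -- support bounds c d
  have hhalf : R/2 ∈ Ioo (0:ℝ) R := ⟨by linarith, by linarith⟩
  set K' : Set ℝ := insert (R/2) (tsupport u) with hK'def
  have hK'c : IsCompact K' := husupp.insert _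
  have hK'sub : K' ⊆ Ioo 0 R := insert_subset hhalf hsupp
  have hK'ne : K'.Nonempty := ⟨R/2, mem_insert _ _⟩
  set c : ℝ := sInf K' with hcdef
  set d : ℝ := sSup K' with hddef
  have hcK : c ∈ K' := hK'c.sInf_mem hK'ne
  have hdK : d ∈ K' := hK'c.sSup_mem hK'ne
  have hcI : c ∈ Ioo (0:ℝ) R := hK'sub hcK
  have hdI : d ∈ Ioo (0:ℝ) R := hK'sub hdK
  have hcd : c ≤ d := csInf_le_csSup hK'ne hK'c.bddBelow hK'c.bddAbove
  have hIccsub : Icc c d ⊆ Ioo 0 R := fun x hx =>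
    ⟨lt_of_lt_of_le hcI.1 hx.1, lt_of_le_of_lt hx.2 hdI.2⟩
  have hsubIcc : tsupport u ⊆ Icc c d := fun x hx =>
    ⟨csInf_le hK'c.bddBelow (mem_insert_of_mem _ hx),
     le_csSup hK'c.bddAbove (mem_insert_of_mem _ hx)⟩
  have huc : u c = 0 := by
    by_contra h
    have hmem : c ∈ Function.support u := h
    obtain ⟨ε, hε, hball⟩ := Metric.isOpen_iff.1 hucont.isOpen_support c hmem
    have h1 : c - ε/2 ∈ Function.support u := by
      apply hball
      simp only [Metric.mem_ball, Real.dist_eq]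
      rw [abs_of_neg (by linarith : c - ε/2 - c < 0)]
      linarith
    have h2 : c ≤ c - ε/2 := csInf_le hK'c.bddBelow
      (mem_insert_of_mem _ (subset_tsupport u h1))
    linarith
  have hud : u d = 0 := by
    by_contra h
    have hmem : d ∈ Function.support u := h
    obtain ⟨ε, hε, hball⟩ := Metric.isOpen_iff.1 hucont.isOpen_support d hmem
    have h1 : d + ε/2 ∈ Function.support u := by
      apply hball
      simp only [Metric.mem_ball, Real.dist_eq]
      rw [abs_of_pos (by linarith : (0:ℝ) < d + ε/2 - d)]
      linarith
    have h2 : d + ε/2 ≤ d := le_csSup hK'c.bddAbove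
      (mem_insert_of_mem _ (subset_tsupport u h1))
    linarith
  have hzero : ∀ r ∈ Ioo (0:ℝ) R \ Icc c d, u r = 0 ∧ deriv u r = 0 := by
    intro r hr
    have : r ∉ tsupport u := fun hmem => hr.2 (hsubIcc hmem)
    exact ⟨hu0 r this, hderiv0 r this⟩
  -- |A| computations
  have habsA1 : ∀ r ∈ Ioo (0:ℝ) R, |A r| = k * |u r| / (r ^ (1/p) * L r) := by
    intro r hr
    have hden : 0 < r ^ (1/p) * L r :=
      mul_pos (Real.rpow_pos_of_pos hr.1 _) (hLpos r hr)
    rw [hAdef]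
    rw [abs_neg, abs_div, abs_mul, abs_of_pos hk0, abs_of_pos hden]
  have habsA : ∀ r ∈ Ioo (0:ℝ) R,
      |A r| ^ p = k ^ p * (|u r| ^ p / (r * (L r) ^ p)) := by
    intro r hr
    have hLr := hLpos r hr
    have hρ : 0 < r ^ (1/p) := Real.rpow_pos_of_pos hr.1 _
    have hden : 0 < r ^ (1/p) * L r := mul_pos hρ hLr
    rw [habsA1 r hr, Real.div_rpow (by positivity) hden.le,
      Real.mul_rpow hk0.le (abs_nonneg _), Real.mul_rpow hρ.le hLr.le,
      ← Real.rpow_mul hr.1.le, show 1/p * p = 1 by field_simp, Real.rpow_one]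
    ring
  have habsAB : ∀ r ∈ Ioo (0:ℝ) R, |A r - B r| ^ p = |deriv u r| ^ p * r ^ (p-1) := by
    intro r hr
    have h1 : A r - B r = deriv u r * r ^ k := by rw [hBdef]; ring
    rw [h1, abs_mul, Real.mul_rpow (abs_nonneg _) (abs_nonneg _),
      abs_of_pos (Real.rpow_pos_of_pos hr.1 k), ← Real.rpow_mul hr.1.le, hkp]
  -- derivative of F equals G on Ioo 0 R
  have hF : ∀ r ∈ Ioo (0:ℝ) R, HasDerivAt F (G r) r := by
    intro r hr
    have hr0 : 0 < r := hr.1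
    have hw : 0 < L r := hLpos r hr
    have hρ : 0 < r ^ (1/p) := Real.rpow_pos_of_pos hr0 _
    have hLder : HasDerivAt L (-r⁻¹) r := by
      have h1 : HasDerivAt (fun x : ℝ => Real.log R - Real.log x) (-r⁻¹) r := by
        simpa using (Real.hasDerivAt_log hr0.ne').const_sub (Real.log R)
      apply h1.congr_of_eventuallyEq
      filter_upwards [Ioi_mem_nhds hr0] with x hx
      rw [hLdef]
      exact Real.log_div hR.ne' (ne_of_gt hx)
    have hLp : HasDerivAt (fun x => L x ^ (1-p)) ((1-p) * (L r) ^ (-p) * -r⁻¹) r := by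
      have h2 := (Real.hasDerivAt_rpow_const (p := 1-p) (Or.inl hw.ne')).comp r hLder
      refine h2.congr_deriv ?_
      rw [show (1:ℝ)-p-1 = -p by ring]
    have hup : HasDerivAt (fun x => |u x| ^ p) (p * |u r| ^ (p-2) * u r * deriv u r) r := by
      have h3 := (myHasDerivAt_abs_rpow hp2 (u r)).comp r (hudiff r)
      exact h3
    have hFd : HasDerivAt F (-(k^(p-1)) * ((p * |u r| ^ (p-2) * u r * deriv u r) * (L r) ^ (1-p)
        + |u r| ^ p * ((1-p) * (L r) ^ (-p) * -r⁻¹))) r := by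
      rw [hFdef]
      exact (hup.mul hLp).const_mul _
    convert hFd using 1
    -- the algebraic identity G r = F' value
    set X : ℝ := |u r| ^ (p-2) with hXdef
    set Y : ℝ := u r with hYdef
    set Z : ℝ := deriv u r with hZdef
    set w : ℝ := L r with hwdef
    set ρ : ℝ := r ^ (1/p) with hρdef
    set W : ℝ := w ^ (p-2) with hWdef
    set E : ℝ := ρ ^ (p-2) with hEdef
    set κ : ℝ := k ^ (p-2) with hκdef
    have hXP : X * Y * Y = |Y| ^ p := myAbs_rpow_sub_two hp2 Y
    have hW0 : 0 < W := Real.rpow_pos_of_pos hw _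
    have hE0 : 0 < E := Real.rpow_pos_of_pos hρ _
    have hWw : w ^ (p-1) = W * w := by
      rw [show p-1 = (p-2)+1 by ring, Real.rpow_add_one hw.ne']
    have hwp : w ^ p = W * w * w := by
      rw [show p = (p-2)+1+1 by ring, Real.rpow_add_one hw.ne', Real.rpow_add_one hw.ne']
    have hw1 : w ^ (1-p) = (W * w)⁻¹ := by
      rw [show (1:ℝ)-p = -(p-1) by ring, Real.rpow_neg hw.le, hWw]
    have hw2 : w ^ (-p) = (W * w * w)⁻¹ := by
      rw [Real.rpow_neg hw.le, hwp]
    have hρ1 : ρ ^ (p-1) = E * ρ := by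
      rw [show p-1 = (p-2)+1 by ring, Real.rpow_add_one hρ.ne']
    have hρp : ρ ^ p = r := by
      rw [hρdef, ← Real.rpow_mul hr0.le, show 1/p * p = 1 by field_simp, Real.rpow_one]
    have hrE : r = E * ρ * ρ := by
      rw [← hρp, show p = (p-2)+1+1 by ring, Real.rpow_add_one hρ.ne', Real.rpow_add_one hρ.ne']
    have hrk : r ^ k = E * ρ := by
      rw [show k = 1/p * (p-1) by rw [hkdef]; ring, Real.rpow_mul hr0.le, ← hρdef, hρ1]
    have hk1 : k ^ (p-1) = κ * k := by
      rw [show p-1 = (p-2)+1 by ring, Real.rpow_add_one hk0.ne']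
    have habs2 : |A r| ^ (p-2) = κ * X / (E * W) := by
      rw [habsA1 r hr, ← hwdef, ← hρdef, Real.div_rpow (by positivity) (by positivity),
        Real.mul_rpow hk0.le (abs_nonneg _), Real.mul_rpow hρ.le hw.le,
        ← hκdef, ← hXdef, ← hEdef, ← hWdef]
    rw [hGdef, hBdef, hAdef]
    simp only [← hwdef, ← hρdef, ← hYdef, ← hZdef]
    rw [habs2, hrk, hk1, hw1, hw2, ← hXP, hrE]
    field_simp
    ring_nf
    field_simp
    linear_combination (-(κ * X * Y ^ 2)) * hkp
  -- continuity
  have habsca : ∀ q : ℝ, 0 ≤ q → Continuous (fun y : ℝ => |y| ^ q) :=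
    fun q hq => (Real.continuous_rpow_const hq).comp continuous_abs
  have hAca : ∀ x ∈ Ioo (0:ℝ) R, ContinuousAt A x := by
    intro x hx
    rw [hAdef]
    exact ((continuousAt_const.mul hucont.continuousAt).div
      ((Real.continuousAt_rpow_const x _ (Or.inl hx.1.ne')).mul (hLca x hx))
      (ne_of_gt (mul_pos (Real.rpow_pos_of_pos hx.1 _) (hLpos x hx)))).neg
  have hBca : ∀ x ∈ Ioo (0:ℝ) R, ContinuousAt B x := by
    intro x hx
    rw [hBdef]
    exact (hAca x hx).sub (hu'cont.continuousAt.mul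
      (Real.continuousAt_rpow_const x _ (Or.inl hx.1.ne')))
  have hGca : ∀ x ∈ Ioo (0:ℝ) R, ContinuousAt G x := by
    intro x hx
    rw [hGdef]
    exact ((continuousAt_const.mul
      (((habsca (p-2) (by linarith)).continuousAt).comp (hAca x hx))).mul
      (hAca x hx)).mul (hBca x hx)
  -- zero values off [c,d]
  have hA0 : ∀ r ∈ Ioo (0:ℝ) R \ Icc c d, A r = 0 := by
    intro r hr
    rw [hAdef]
    simp [(hzero r hr).1]
  have hB0 : ∀ r ∈ Ioo (0:ℝ) R \ Icc c d, B r = 0 := by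
    intro r hr
    simp only [hBdef]
    rw [hA0 r hr, (hzero r hr).2]
    ring
  -- integrability
  have I1 : IntegrableOn (fun r => |deriv u r| ^ p * r ^ (p-1)) (Ioo 0 R) volume := by
    apply myIntegrableOn R c d _ hIccsub
    · intro x hx
      exact (((habsca p (by linarith)).continuousAt.comp hu'cont.continuousAt).mul
        (Real.continuousAt_rpow_const x _ (Or.inl hx.1.ne'))).continuousWithinAt
    · intro r hr
      rw [(hzero r hr).2]
      simp [Real.zero_rpow hQne]
  have I2 : IntegrableOn (fun r => |u r| ^ p / (r * Real.log (R/r) ^ p)) (Ioo 0 R) volume := by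
    apply myIntegrableOn R c d _ hIccsub
    · intro x hx
      refine ContinuousAt.continuousWithinAt ?_
      refine ((habsca p (by linarith)).continuousAt.comp hucont.continuousAt).div
        (continuousAt_id.mul (((Real.continuous_rpow_const (le_of_lt hQ0)).continuousAt).comp
          (hLca x hx))) ?_
      exact ne_of_gt (mul_pos hx.1 (Real.rpow_pos_of_pos (hLpos x hx) p))
    · intro r hr
      rw [(hzero r hr).1]
      simp [Real.zero_rpow hQne]
  have I3 : IntegrableOn G (Ioo 0 R) volume := by
    apply myIntegrableOn R c d _ hIccsub
    · intro x hx
      exact (hGca x hx).continuousWithinAt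
    · intro r hr
      simp only [hGdef]
      rw [hA0 r hr, hB0 r hr]
      ring
  have I4 : IntegrableOn (fun r => |B r| ^ p) (Ioo 0 R) volume := by
    apply myIntegrableOn R c d _ hIccsub
    · intro x hx
      exact ((habsca p (by linarith)).continuousAt.comp (hBca x hx)).continuousWithinAt
    · intro r hr
      rw [hB0 r hr]
      simp [Real.zero_rpow hQne]
  -- pointwise inequality
  have key : ∀ r ∈ Ioo (0:ℝ) R,
      G r + C * |B r| ^ p
        ≤ |deriv u r| ^ p * r ^ (p-1) - k ^ p * (|u r| ^ p / (r * Real.log (R/r) ^ p)) := by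
    intro r hr
    have h := hCineq (A r) (B r)
    rw [habsAB r hr, habsA r hr] at h
    simp only [hLdef] at h
    rw [hGdef]
    linarith
  -- cross term integrates to zero
  have hGint0 : ∫ r in Ioo (0:ℝ) R, G r = 0 := by
    have h1 : ∫ r in Ioo (0:ℝ) R, G r = ∫ r in Icc c d, G r := by
      rw [show Ioo (0:ℝ) R = Icc c d ∪ (Ioo 0 R \ Icc c d) from (union_diff_cancel hIccsub).symm]
      apply integral_union_eq_left_of_ae
      refine (ae_restrict_iff' (measurableSet_Ioo.diff measurableSet_Icc)).2 (ae_of_all _ ?_)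
      intro r hr
      simp only [hGdef]
      rw [hA0 r hr, hB0 r hr]
      ring
    have h2 : ∫ r in Icc c d, G r = ∫ r in (c:ℝ)..d, G r := by
      rw [intervalIntegral.integral_of_le hcd, integral_Icc_eq_integral_Ioc]
    have h3 : ∫ r in (c:ℝ)..d, G r = F d - F c := by
      apply intervalIntegral.integral_eq_sub_of_hasDerivAt
      · intro x hx
        exact hF x (hIccsub (by rwa [uIcc_of_le hcd] at hx))
      · apply ContinuousOn.intervalIntegrable
        intro x hx
        exact (hGca x (hIccsub (by rwa [uIcc_of_le hcd] at hx))).continuousWithinAt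
    have hFc : F c = 0 := by
      rw [hFdef]; simp [huc, Real.zero_rpow hQne]
    have hFd0 : F d = 0 := by
      rw [hFdef]; simp [hud, Real.zero_rpow hQne]
    rw [h1, h2, h3, hFc, hFd0]
    ring
  -- change of variables
  have hfderiv : ∀ s ∈ Ioi (0:ℝ),
      HasDerivAt (fun x : ℝ => R * Real.exp (-1/x)) (R * Real.exp (-1/s) * (s^2)⁻¹) s := by
    intro s hs
    have hs0 : (0:ℝ) < s := hs
    have h1 : HasDerivAt (fun x : ℝ => -1/x) ((s^2)⁻¹) s := by
      have h0 := (hasDerivAt_inv hs0.ne').const_mul (-1:ℝ)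
      simpa [div_eq_mul_inv] using h0
    have h2 := (Real.hasDerivAt_exp (-1/s)).comp s h1
    have h3 := h2.const_mul R
    simpa [Function.comp, mul_assoc] using h3
  have hrpos : ∀ s : ℝ, 0 < s → 0 < R * Real.exp (-1/s) := by
    intro s hs; positivity
  have hrltR : ∀ s : ℝ, 0 < s → R * Real.exp (-1/s) < R := by
    intro s hs
    have h5 : Real.exp (-1/s) < 1 := by
      rw [Real.exp_lt_one_iff]
      rw [neg_div, neg_lt, neg_zero]
      positivity
    exact mul_lt_of_lt_one_right hR h5
  have himg : (fun s : ℝ => R * Real.exp (-1/s)) '' Ioi 0 = Ioo 0 R := by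
    apply Subset.antisymm
    · rintro x ⟨s, hs, rfl⟩
      exact ⟨hrpos s hs, hrltR s hs⟩
    · intro r hr
      have hlog : 0 < Real.log (R/r) := Real.log_pos ((one_lt_div hr.1).mpr hr.2)
      refine ⟨(Real.log (R/r))⁻¹, inv_pos.mpr hlog, ?_⟩
      show R * Real.exp (-1/(Real.log (R/r))⁻¹) = r
      rw [show -1/(Real.log (R/r))⁻¹ = -Real.log (R/r) by field_simp]
      rw [Real.exp_neg, Real.exp_log (div_pos hR hr.1), inv_div, mul_comm,
        div_mul_cancel₀ r hR.ne']
  have hinj : InjOn (fun s : ℝ => R * Real.exp (-1/s)) (Ioi 0) := by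
    intro a ha b hb h
    simp only at h
    have h2 : Real.exp (-1/a) = Real.exp (-1/b) := mul_left_cancel₀ hR.ne' h
    have h3 : -1/a = -1/b := Real.exp_injective h2
    have ha0 : (a:ℝ) ≠ 0 := (ne_of_gt ha)
    have hb0 : (b:ℝ) ≠ 0 := (ne_of_gt hb)
    rw [neg_div, neg_div, neg_inj, one_div, one_div] at h3
    exact inv_injective h3
  have hchange : ∫ r in Ioo (0:ℝ) R, |B r| ^ p
      = ∫ s in Ioi (0:ℝ),
          |deriv (fun s : ℝ => s ^ k * u (R * Real.exp (-1/s))) s| ^ p * s ^ (p-1) := by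
    rw [← himg, integral_image_eq_integral_abs_deriv_smul measurableSet_Ioi
      (fun x hx => (hfderiv x hx).hasDerivWithinAt) hinj]
    apply setIntegral_congr_fun measurableSet_Ioi
    intro s hs
    have hs0 : (0:ℝ) < s := hs
    have hr0 : 0 < R * Real.exp (-1/s) := hrpos s hs0
    have hrR : R * Real.exp (-1/s) < R := hrltR s hs0
    have hrI : R * Real.exp (-1/s) ∈ Ioo (0:ℝ) R := ⟨hr0, hrR⟩
    set r' : ℝ := R * Real.exp (-1/s) with hr'def
    have hρ' : 0 < r' ^ (1/p) := Real.rpow_pos_of_pos hr0 _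
    have hLr' : L r' = s⁻¹ := by
      simp only [hLdef]
      have h4 : R / r' = Real.exp (1/s) := by
        rw [hr'def, show (-1:ℝ)/s = -(1/s) by ring, Real.exp_neg]
        field_simp
      rw [h4, Real.log_exp, one_div]
    have hrkroot : r' ^ k * r' ^ (1/p) = r' := by
      rw [← Real.rpow_add hr0, show k + 1/p = 1 by rw [hkdef]; field_simp; ring, Real.rpow_one]
    have hrk2 : r' ^ k = r' / r' ^ (1/p) := by
      rw [eq_div_iff (ne_of_gt hρ')]; exact hrkroot
    have hρp' : (r' ^ (1/p)) ^ p = r' := by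
      rw [← Real.rpow_mul hr0.le, show 1/p * p = 1 by field_simp, Real.rpow_one]
    have hBr : B r' = -((k * u r' * s + deriv u r' * r') / r' ^ (1/p)) := by
      rw [hBdef]
      rw [hAdef]
      simp only
      rw [hLr', hrk2]
      field_simp
      ring
    have habsB : |B r'| ^ p = |k * u r' * s + deriv u r' * r'| ^ p / r' := by
      rw [hBr, abs_neg, abs_div, abs_of_pos hρ',
        Real.div_rpow (abs_nonneg _) hρ'.le, hρp']
    have hvd : HasDerivAt (fun x : ℝ => x ^ k * u (R * Real.exp (-1/x)))
        (k * s ^ (k-1) * u r' + s ^ k * (deriv u r' * (R * Real.exp (-1/s) * (s^2)⁻¹))) s := by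
      have h1 : HasDerivAt (fun x : ℝ => x ^ k) (k * s ^ (k-1)) s :=
        Real.hasDerivAt_rpow_const (Or.inl hs0.ne')
      have h2 : HasDerivAt (fun x : ℝ => u (R * Real.exp (-1/x)))
          (deriv u r' * (R * Real.exp (-1/s) * (s^2)⁻¹)) s := by
        have := (hudiff (R * Real.exp (-1/s))).comp s (hfderiv s hs)
        exact this
      exact h1.mul h2
    have hdv : deriv (fun x : ℝ => x ^ k * u (R * Real.exp (-1/x))) s
        = s ^ (k-2) * (k * u r' * s + deriv u r' * r') := by
      rw [hvd.deriv]
      have e1 : s ^ (k-1) = s ^ (k-2) * s := by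
        rw [show k-1 = (k-2)+1 by ring, Real.rpow_add_one hs0.ne']
      have e2 : s ^ (k-2) * s * s = s ^ k := by
        rw [← Real.rpow_add_one hs0.ne', ← Real.rpow_add_one hs0.ne']
        congr 1
        ring
      rw [e1, ← e2, ← hr'def]
      field_simp
    show |R * Real.exp (-1/s) * (s^2)⁻¹| • |B r'| ^ p
      = |deriv (fun x : ℝ => x ^ k * u (R * Real.exp (-1/x))) s| ^ p * s ^ (p-1)
    rw [smul_eq_mul, hdv, habsB, ← hr'def]
    rw [abs_of_pos (by positivity : (0:ℝ) < r' * (s^2)⁻¹)]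
    rw [abs_mul, Real.mul_rpow (abs_nonneg _) (abs_nonneg _),
      abs_of_pos (Real.rpow_pos_of_pos hs0 _), ← Real.rpow_mul hs0.le]
    have hexp : s ^ ((k-2)*p) * s ^ (p-1) = (s^2)⁻¹ := by
      rw [← Real.rpow_add hs0, show (k-2)*p + (p-1) = -2 by linear_combination hkp,
        Real.rpow_neg hs0.le, show (2:ℝ) = ((2:ℕ):ℝ) by norm_num, Real.rpow_natCast]
    have hLHS : r' * (s^2)⁻¹ * (|k * u r' * s + deriv u r' * r'| ^ p / r')
        = (s^2)⁻¹ * |k * u r' * s + deriv u r' * r'| ^ p := by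
      field_simp
    rw [hLHS, ← hexp]
    ring
  -- final assembly
  have hfinal : C * (∫ s in Ioi (0:ℝ),
        |deriv (fun s : ℝ => s ^ k * u (R * Real.exp (-1/s))) s| ^ p * s ^ (p-1))
      ≤ (∫ r in Ioo (0:ℝ) R, |deriv u r| ^ p * r ^ (p-1))
        - k ^ p * ∫ r in Ioo (0:ℝ) R, |u r| ^ p / (r * Real.log (R/r) ^ p) := by
    have step1 : C * (∫ s in Ioi (0:ℝ),
        |deriv (fun s : ℝ => s ^ k * u (R * Real.exp (-1/s))) s| ^ p * s ^ (p-1))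
        = ∫ r in Ioo (0:ℝ) R, (G r + C * |B r| ^ p) := by
      rw [← hchange, integral_add I3 (I4.const_mul C), integral_const_mul C, hGint0]
      ring
    have step2 : (∫ r in Ioo (0:ℝ) R, (G r + C * |B r| ^ p))
        ≤ ∫ r in Ioo (0:ℝ) R,
            (|deriv u r| ^ p * r ^ (p-1) - k ^ p * (|u r| ^ p / (r * Real.log (R/r) ^ p))) :=
      setIntegral_mono_on (I3.add (I4.const_mul C))
        (I1.sub ((I2.const_mul (k ^ p)))) measurableSet_Ioo key
    have step3 : (∫ r in Ioo (0:ℝ) R,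
            (|deriv u r| ^ p * r ^ (p-1) - k ^ p * (|u r| ^ p / (r * Real.log (R/r) ^ p))))
        = (∫ r in Ioo (0:ℝ) R, |deriv u r| ^ p * r ^ (p-1))
          - k ^ p * ∫ r in Ioo (0:ℝ) R, |u r| ^ p / (r * Real.log (R/r) ^ p) := by
      rw [integral_sub I1 ((I2.const_mul (k ^ p))), integral_const_mul]
    linarith
  exact hfinal
end

section
/- Let n ≥ 2, let q > 0 and −1 < L < n − 2 satisfy α := q(n−1)/n + L + 2 ≤ n. Then for every positive non-increasing smooth radial function u compactly supported in B(0,R) ⊂ ℝⁿ, ∫_{B(0,R)} |∂_r u|^n dx − ((n−1)/n)^n ∫_{B(0,R)} |u(x)|^n / (|x|^n (log(Re/|x|))^n) dx ≥ |𝕊^{n−1}|^{1−n/q} C^{n/q} (∫_{B(0,R)} |u(x)|^q / (|x|^n (log(Re/|x|))^α) dx)^{n/q}, where C^{−1} = ∫₀¹ s^L (log(1/s))^{q(n−1)/n} ds = Γ(q(n−1)/n + 1) / (L+1)^{q(n−1)/n + 1}. -/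
open MeasureTheory

section ICHP_Aux
open Set Real
set_option maxHeartbeats 2000000


lemma ichp_aux1 {n : ℕ} (hn : 2 ≤ n) {a b : ℝ} (ha : 0 ≤ a) (hb : 0 ≤ b) :
    a ^ n + n * a ^ (n - 1) * b + b ^ n ≤ (a + b) ^ n := by
  obtain ⟨m, rfl⟩ : ∃ m, n = m + 1 := ⟨n - 1, by omega⟩
  have hm : 1 ≤ m := by omega
  have hid : (∑ i ∈ Finset.range (m+1), (a + b) ^ i * a ^ (m - i)) * b
      = (a + b) ^ (m+1) - a ^ (m+1) := by
    have := geom_sum₂_mul (a + b) a (m+1)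
    simp only [Nat.add_sub_cancel] at this
    simpa using this
  have h1 : ∀ i ∈ Finset.range m, a ^ m ≤ (a + b) ^ i * a ^ (m - i) := by
    intro i hi
    simp only [Finset.mem_range] at hi
    have : a ^ m = a ^ i * a ^ (m - i) := by rw [← pow_add]; congr 1; omega
    rw [this]
    gcongr
    linarith
  have h2 : (m : ℝ) * a ^ m ≤ ∑ i ∈ Finset.range m, (a + b) ^ i * a ^ (m - i) := by
    calc (m : ℝ) * a ^ m = ∑ _i ∈ Finset.range m, a ^ m := by simp [mul_comm]
    _ ≤ _ := Finset.sum_le_sum h1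
  have h3 : a ^ m + b ^ m ≤ (a + b) ^ m := pow_add_pow_le ha hb (by omega)
  have hsum : (m : ℝ) * a ^ m + (a ^ m + b ^ m)
      ≤ ∑ i ∈ Finset.range (m+1), (a + b) ^ i * a ^ (m - i) := by
    rw [Finset.sum_range_succ, Nat.sub_self, pow_zero, mul_one]
    linarith
  have hmul := mul_le_mul_of_nonneg_right hsum hb
  rw [hid] at hmul
  have hbn : b ^ m * b = b ^ (m+1) := by rw [← pow_succ]
  simp only [Nat.add_sub_cancel]
  push_cast
  nlinarith [hmul]

lemma ichp_aux2 {n : ℕ} (hn : 2 ≤ n) {x c : ℝ} (hx : 0 ≤ x) (hc : 0 ≤ c) :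
    (x + c) ^ n + c ^ n ≤ x ^ n + n * (x + c) ^ (n - 1) * c := by
  obtain ⟨m, rfl⟩ : ∃ m, n = m + 1 := ⟨n - 1, by omega⟩
  have hid : (∑ i ∈ Finset.range (m+1), (x + c) ^ i * x ^ (m - i)) * c
      = (x + c) ^ (m+1) - x ^ (m+1) := by
    have := geom_sum₂_mul (x + c) x (m+1)
    simp only [Nat.add_sub_cancel] at this
    simpa using this
  have h1 : ∀ i ∈ Finset.range m, (x + c) ^ (i+1) * x ^ (m - (i+1)) ≤ (x + c) ^ m := by
    intro i hi
    simp only [Finset.mem_range] at hi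
    have : (x + c) ^ m = (x + c) ^ (i+1) * (x + c) ^ (m - (i+1)) := by
      rw [← pow_add]; congr 1; omega
    rw [this]
    gcongr
    all_goals linarith
  have h2 : ∑ i ∈ Finset.range m, (x + c) ^ (i+1) * x ^ (m - (i+1)) ≤ (m : ℝ) * (x + c) ^ m := by
    calc _ ≤ ∑ _i ∈ Finset.range m, (x + c) ^ m := Finset.sum_le_sum h1
    _ = (m : ℝ) * (x + c) ^ m := by simp [mul_comm]
  have h3 : x ^ m + c ^ m ≤ (x + c) ^ m := pow_add_pow_le hx hc (by omega)
  have hsum : ∑ i ∈ Finset.range (m+1), (x + c) ^ i * x ^ (m - i)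
      ≤ (m : ℝ) * (x + c) ^ m + ((x + c) ^ m - c ^ m) := by
    rw [Finset.sum_range_succ']
    simp only [pow_zero, one_mul, Nat.sub_zero]
    linarith
  have hmul := mul_le_mul_of_nonneg_right hsum hc
  rw [hid] at hmul
  have hcn : c ^ m * c = c ^ (m+1) := by rw [← pow_succ]
  simp only [Nat.add_sub_cancel]
  push_cast
  nlinarith [hmul]

lemma ichp_pow_ineq {n : ℕ} (hn : 2 ≤ n) {a b : ℝ} (ha : 0 ≤ a) (hab : 0 ≤ a + b) :
    a ^ n + n * a ^ (n - 1) * b + |b| ^ n ≤ (a + b) ^ n := by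
  rcases le_or_gt 0 b with hb | hb
  · rw [abs_of_nonneg hb]; exact ichp_aux1 hn ha hb
  · rw [abs_of_neg hb]
    have h := ichp_aux2 hn (x := a + b) (c := -b) hab (by linarith)
    have hxc : a + b + -b = a := by ring
    rw [hxc] at h
    linarith

/-- integrability on `Ioi 1` by domination by `c * t ^ e`, `e < -1`. -/
lemma ichp_integrable {f : ℝ → ℝ} {c e : ℝ} (he : e < -1)
    (hf : ContinuousOn f (Ioi 1)) (h : ∀ t ∈ Ioi (1:ℝ), |f t| ≤ c * t ^ e) :
    IntegrableOn f (Ioi (1:ℝ)) := by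
  have hg : IntegrableOn (fun t : ℝ => c * t ^ e) (Ioi 1) :=
    (integrableOn_Ioi_rpow_of_lt he one_pos).const_mul c
  refine Integrable.mono' hg (hf.aestronglyMeasurable measurableSet_Ioi) ?_
  rw [ae_restrict_iff' measurableSet_Ioi]
  exact ae_of_all _ fun t ht => by simpa [Real.norm_eq_abs] using h t ht

lemma ichp_img_exp : Real.exp '' Ioi (0:ℝ) = Ioi 1 := by
  ext x
  constructor
  · rintro ⟨y, hy, rfl⟩
    simpa using Real.one_lt_exp_iff.mpr hy
  · intro hx
    exact ⟨Real.log x, Real.log_pos hx, Real.exp_log (by linarith [mem_Ioi.mp hx])⟩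

lemma ichp_img_exp_neg : (fun y : ℝ => Real.exp (-y)) '' Ioi (0:ℝ) = Ioo 0 1 := by
  ext x
  constructor
  · rintro ⟨y, hy, rfl⟩
    exact ⟨Real.exp_pos _, Real.exp_lt_one_iff.mpr (by simpa using hy)⟩
  · rintro ⟨hx0, hx1⟩
    exact ⟨-Real.log x, by simpa using Real.log_neg hx0 hx1,
      by show Real.exp (-(-Real.log x)) = x; rw [neg_neg, Real.exp_log hx0]⟩

lemma ichp_img_R {R : ℝ} (hR : 0 < R) :
    (fun t : ℝ => R * Real.exp (1 - t)) '' Ioi (1:ℝ) = Ioo 0 R := by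
  ext x
  constructor
  · rintro ⟨t, ht, rfl⟩
    refine ⟨by positivity, ?_⟩
    show R * Real.exp (1 - t) < R
    have : Real.exp (1 - t) < 1 := Real.exp_lt_one_iff.mpr (by simpa using ht)
    nlinarith
  · rintro ⟨hx0, hxR⟩
    refine ⟨1 - Real.log (x / R), ?_, ?_⟩
    · have : Real.log (x / R) < 0 := Real.log_neg (by positivity) ((div_lt_one hR).mpr hxR)
      simp only [mem_Ioi]; linarith
    · show R * Real.exp (1 - (1 - Real.log (x / R))) = x
      have : (1:ℝ) - (1 - Real.log (x / R)) = Real.log (x / R) := by ring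
      rw [this, Real.exp_log (by positivity)]
      field_simp

/-- substitution `r = R e^{1-t}` for integrals over `Ioo 0 R`. -/
lemma ichp_subst_R {R : ℝ} (hR : 0 < R) (g : ℝ → ℝ) :
    ∫ r in Ioo 0 R, g r
      = ∫ t in Ioi (1:ℝ), (R * Real.exp (1 - t)) * g (R * Real.exp (1 - t)) := by
  rw [← ichp_img_R hR]
  rw [integral_image_eq_integral_abs_deriv_smul measurableSet_Ioi
    (f' := fun t => -(R * Real.exp (1 - t))) ?_ ?_ g]
  · refine setIntegral_congr_fun measurableSet_Ioi fun t _ => ?_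
    rw [abs_neg, abs_of_pos (by positivity), smul_eq_mul]
  · intro t _
    have h1 : HasDerivAt (fun t : ℝ => 1 - t) (-1) t := by
      simpa using (hasDerivAt_id t).const_sub 1
    have h2 : HasDerivAt (fun t : ℝ => R * Real.exp (1 - t))
        (R * (Real.exp (1 - t) * (-1))) t :=
      ((Real.hasDerivAt_exp (1 - t)).comp t h1).const_mul R
    refine (h2.congr_deriv (by ring)).hasDerivWithinAt
  · intro t₁ _ t₂ _ h
    have := mul_left_cancel₀ hR.ne' h
    have := Real.exp_injective this
    linarith

/-- substitution `t = e^y`, transferring integrals over `Ioi 1` to `Ioi 0`. -/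
lemma ichp_subst_exp (g : ℝ → ℝ) :
    ∫ t in Ioi (1:ℝ), g t = ∫ y in Ioi (0:ℝ), Real.exp y * g (Real.exp y) := by
  rw [← ichp_img_exp]
  rw [integral_image_eq_integral_abs_deriv_smul measurableSet_Ioi
    (f' := fun y => Real.exp y)
    (fun y _ => (Real.hasDerivAt_exp y).hasDerivWithinAt)
    (Real.exp_injective.injOn) g]
  refine setIntegral_congr_fun measurableSet_Ioi fun y _ => ?_
  rw [abs_of_pos (Real.exp_pos y), smul_eq_mul]

lemma ichp_subst_exp_neg (g : ℝ → ℝ) :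
    ∫ s in Ioo (0:ℝ) 1, g s = ∫ y in Ioi (0:ℝ), Real.exp (-y) * g (Real.exp (-y)) := by
  rw [← ichp_img_exp_neg]
  rw [integral_image_eq_integral_abs_deriv_smul measurableSet_Ioi
    (f' := fun y => -Real.exp (-y)) ?_ ?_ g]
  · refine setIntegral_congr_fun measurableSet_Ioi fun y _ => ?_
    rw [abs_neg, abs_of_pos (Real.exp_pos _), smul_eq_mul]
  · intro y _
    have h1 : HasDerivAt (fun y : ℝ => -y) (-1) y := by
      exact (hasDerivAt_id y).neg
    have h2 := (Real.hasDerivAt_exp (-y)).comp y h1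
    refine (h2.congr_deriv (by ring)).hasDerivWithinAt
  · intro y₁ _ y₂ _ h
    have := Real.exp_injective h
    linarith

lemma ichp_gamma_int {p b : ℝ} (hp : 0 < p) (hb : 0 < b) :
    IntegrableOn (fun y : ℝ => y ^ p * Real.exp (-(b * y))) (Ioi 0) := by
  have h := integrableOn_rpow_mul_exp_neg_mul_rpow (p := 1) (s := p) (b := b)
    (by linarith) one_pos hb
  refine h.congr_fun (fun y _ => ?_) measurableSet_Ioi
  simp only [Real.rpow_one, neg_mul]

lemma ichp_gamma_val {p b : ℝ} (hp : 0 < p) (hb : 0 < b) :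
    ∫ y in Ioi (0:ℝ), y ^ p * Real.exp (-(b * y)) = (1/b) ^ (p+1) * Real.Gamma (p+1) := by
  have h := Real.integral_rpow_mul_exp_neg_mul_Ioi (a := p+1) (r := b) (by linarith) hb
  simp only [add_sub_cancel_right] at h
  exact h

lemma ichp_conj1 {p L : ℝ} (hp : 0 < p) (hL : -1 < L) :
    ∫ s in Ioo (0:ℝ) 1, s ^ L * (Real.log (1/s)) ^ p
      = (1/(L+1)) ^ (p+1) * Real.Gamma (p+1) := by
  rw [ichp_subst_exp_neg (fun s => s ^ L * (Real.log (1/s)) ^ p)]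
  rw [← ichp_gamma_val hp (by linarith : (0:ℝ) < L + 1)]
  refine setIntegral_congr_fun measurableSet_Ioi fun y hy => ?_
  have h1 : Real.exp (-y) ^ L = Real.exp (-y * L) := (Real.exp_mul (-y) L).symm
  have h2 : Real.log (1 / Real.exp (-y)) = y := by
    rw [one_div, Real.log_inv, Real.log_exp, neg_neg]
  show Real.exp (-y) * (Real.exp (-y) ^ L * Real.log (1 / Real.exp (-y)) ^ p) = _
  rw [h1, h2]
  rw [show (-(( L + 1) * y)) = (-y) + (-y * L) by ring, Real.exp_add]
  ring

lemma ichp_cinv_val {p L : ℝ} (hp : 0 < p) (hL : -1 < L) :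
    ∫ t in Ioi (1:ℝ), (Real.log t) ^ p * t ^ (-(L+2))
      = (1/(L+1)) ^ (p+1) * Real.Gamma (p+1) := by
  rw [ichp_subst_exp (fun t => (Real.log t) ^ p * t ^ (-(L+2)))]
  rw [← ichp_gamma_val hp (by linarith : (0:ℝ) < L + 1)]
  refine setIntegral_congr_fun measurableSet_Ioi fun y hy => ?_
  show Real.exp y * (Real.log (Real.exp y) ^ p * Real.exp y ^ (-(L+2))) = _
  rw [Real.log_exp, ← Real.exp_mul]
  rw [show (-((L + 1) * y)) = y + y * (-(L+2)) by ring, Real.exp_add]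
  ring

lemma ichp_cinv_integrable {p L : ℝ} (hp : 0 < p) (hL : -1 < L) :
    IntegrableOn (fun t : ℝ => (Real.log t) ^ p * t ^ (-(L+2))) (Ioi 1) := by
  have himg := ichp_img_exp
  have h := integrableOn_image_iff_integrableOn_abs_deriv_smul (s := Ioi (0:ℝ)) measurableSet_Ioi
    (f' := fun y : ℝ => Real.exp y)
    (fun y _ => (Real.hasDerivAt_exp y).hasDerivWithinAt)
    (Real.exp_injective.injOn)
    (fun t : ℝ => (Real.log t) ^ p * t ^ (-(L+2)))
  rw [himg] at h
  rw [h]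
  refine (ichp_gamma_int hp (by linarith : (0:ℝ) < L + 1)).congr_fun
    (fun y _ => ?_) measurableSet_Ioi
  show y ^ p * Real.exp (-((L+1) * y))
      = |Real.exp y| • (Real.log (Real.exp y) ^ p * Real.exp y ^ (-(L+2)))
  rw [abs_of_pos (Real.exp_pos y), smul_eq_mul, Real.log_exp, ← Real.exp_mul]
  rw [show (-((L + 1) * y)) = y + y * (-(L+2)) by ring, Real.exp_add]
  ring


theorem ichp_core1d (n : ℕ) (hn : 2 ≤ n) (q L α : ℝ) (hq : 0 < q) (hL : -1 < L)
    (hα : α = q * ((n : ℝ) - 1) / n + L + 2)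
    (w w' : ℝ → ℝ) (hw : ∀ t, HasDerivAt w (w' t) t)
    (hwc : Continuous w) (hw'c : Continuous w')
    (hw1 : w 1 = 0)
    (hwpos : ∀ t ∈ Ioi (1:ℝ), 0 ≤ w t)
    (hw'pos : ∀ t ∈ Ioi (1:ℝ), 0 ≤ w' t)
    (M M' : ℝ) (hM0 : 0 ≤ M) (hM'0 : 0 ≤ M')
    (hM : ∀ t ∈ Ici (1:ℝ), w t ≤ M)
    (hM' : ∀ t ∈ Ici (1:ℝ), |w' t| ≤ M' / t) :
    ((L + 1) ^ (q * ((n : ℝ) - 1) / n + 1) / Real.Gamma (q * ((n : ℝ) - 1) / n + 1)) ^ ((n:ℝ)/q)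
        * (∫ t in Ioi (1:ℝ), (w t) ^ q / t ^ α) ^ ((n:ℝ)/q)
      ≤ (∫ t in Ioi (1:ℝ), (w' t) ^ n)
          - (((n:ℝ)-1)/n) ^ n * ∫ t in Ioi (1:ℝ), (w t / t) ^ n := by
  have hn0 : (0:ℝ) < n := by positivity
  have hn2 : (2:ℝ) ≤ n := by exact_mod_cast hn
  have hn1 : (1:ℝ) ≤ (n:ℝ) - 1 := by linarith
  set c : ℝ := ((n:ℝ)-1)/n with hc_def
  set p : ℝ := q * ((n : ℝ) - 1) / n with hp_def
  have hpqc : p = q * c := by rw [hp_def, hc_def]; ring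
  have hc0 : 0 < c := by rw [hc_def]; positivity
  have hc1 : c ≤ 1 := by rw [hc_def, div_le_one hn0]; linarith
  have hchalf : (1:ℝ)/2 ≤ c := by
    rw [hc_def, div_le_div_iff₀ (by norm_num) hn0]; linarith
  have hcn : c * n = (n:ℝ) - 1 := by rw [hc_def]; field_simp
  have hp0 : 0 < p := by rw [hpqc]; positivity
  have hα1 : 1 < α := by rw [hα]; linarith
  have hcastn1 : ((n:ℝ) - 1) = ((n - 1 : ℕ) : ℝ) := by
    have h1 : (1:ℕ) ≤ n := by omega
    push_cast [h1]; ring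
  -- definitions
  set B : ℝ → ℝ := fun t => w' t - c * (w t / t) with hB_def
  set v : ℝ → ℝ := fun t => w t * t ^ (-c) with hv_def
  set v' : ℝ → ℝ := fun t => w' t * t ^ (-c) + w t * (-c * t ^ (-c - 1)) with hv'_def
  set K : ℝ := ∫ t in Ioi (1:ℝ), |B t| ^ n with hK_def
  have hwnn : ∀ t ∈ Ici (1:ℝ), 0 ≤ w t := by
    intro t ht
    rcases eq_or_lt_of_le (show (1:ℝ) ≤ t from ht) with h | h
    · rw [← h, hw1]
    · exact hwpos t h
  -- derivative of v
  have hvderiv : ∀ t : ℝ, 0 < t → HasDerivAt v (v' t) t := fun t ht =>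
    (hw t).mul (Real.hasDerivAt_rpow_const (Or.inl ht.ne'))
  have hv'B : ∀ t : ℝ, 0 < t → v' t = t ^ (-c) * B t := by
    intro t ht
    have h1 : t ^ (-c - 1) = t ^ (-c) * t⁻¹ := by
      rw [show -c - 1 = -c + -1 by ring, Real.rpow_add ht, Real.rpow_neg_one]
    show w' t * t ^ (-c) + w t * (-c * t ^ (-c - 1)) = t ^ (-c) * (w' t - c * (w t / t))
    rw [h1]
    field_simp
    ring
  -- continuity facts
  have hrpowc : ∀ e : ℝ, ContinuousOn (fun t : ℝ => t ^ e) (Ici 1) := by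
    intro e t ht
    have h0 : t ≠ 0 := by have : (1:ℝ) ≤ t := ht; linarith
    exact (Real.continuousAt_rpow_const t e (Or.inl h0)).continuousWithinAt
  have hvcont : ContinuousOn v (Ici 1) := hwc.continuousOn.mul (hrpowc (-c))
  have hv'cont : ContinuousOn v' (Ici 1) :=
    (hw'c.continuousOn.mul (hrpowc (-c))).add
      (hwc.continuousOn.mul (continuousOn_const.mul (hrpowc (-c-1))))
  have hBcont : ContinuousOn B (Ici 1) :=
    hw'c.continuousOn.sub (continuousOn_const.mul (hwc.continuousOn.div
      continuousOn_id (fun t ht => by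
        have h1 : (1:ℝ) ≤ t := ht
        intro h
        have h2 : t = 0 := h
        linarith)))
  -- pointwise bounds on [1,∞)
  have hAb : ∀ t ∈ Ici (1:ℝ), 0 ≤ c * (w t / t) ∧ c * (w t / t) ≤ M / t := by
    intro t ht
    have ht1 : (1:ℝ) ≤ t := ht
    have ht0 : (0:ℝ) < t := by linarith
    have hw0 := hwnn t ht
    refine ⟨by positivity, ?_⟩
    have h1 : w t / t ≤ M / t := (div_le_div_iff_of_pos_right ht0).mpr (hM t ht)
    have h2 : 0 ≤ w t / t := by positivity
    nlinarith
  have hBb : ∀ t ∈ Ici (1:ℝ), |B t| ≤ (M' + M) / t := by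
    intro t ht
    have ht0 : (0:ℝ) < t := by have h1 : (1:ℝ) ≤ t := ht; linarith
    have h1 := hM' t ht
    have h2 := (hAb t ht).2
    have h3 := (hAb t ht).1
    have h4 : |B t| ≤ |w' t| + c * (w t / t) := by
      simp only [hB_def]
      calc |w' t - c * (w t / t)| ≤ |w' t| + |c * (w t / t)| := abs_sub _ _
      _ = |w' t| + c * (w t / t) := by rw [abs_of_nonneg h3]
    rw [add_div]
    linarith
  have hrple : ∀ t : ℝ, 1 ≤ t → ∀ e₁ e₂ : ℝ, e₁ ≤ e₂ → t ^ e₁ ≤ t ^ e₂ := fun t ht e₁ e₂ h =>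
    Real.rpow_le_rpow_of_exponent_le ht h
  have hpowt : ∀ x t : ℝ, 0 ≤ x → 1 ≤ t → (x/t)^n ≤ x^n * t ^ (-(3:ℝ)/2) := by
    intro x t hx ht
    have ht0 : (0:ℝ) < t := by linarith
    have h1 : (x/t)^n = x^n * ((t:ℝ)^n)⁻¹ := by rw [div_pow]; ring
    have h2 : ((t:ℝ)^n)⁻¹ = t ^ (-(n:ℝ)) := by
      rw [Real.rpow_neg ht0.le, Real.rpow_natCast]
    have h3 : t ^ (-(n:ℝ)) ≤ t ^ (-(3:ℝ)/2) := hrple t ht _ _ (by linarith)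
    rw [h1, h2]
    exact mul_le_mul_of_nonneg_left h3 (by positivity)
  -- integrability
  have hIw' : IntegrableOn (fun t => (w' t) ^ n) (Ioi (1:ℝ)) := by
    refine ichp_integrable (c := M'^n) (e := -(3:ℝ)/2) (by norm_num)
      ((hw'c.continuousOn.pow n).mono (fun x hx => le_of_lt (mem_Ioi.mp hx))) ?_
    intro t ht
    have ht1 : (1:ℝ) ≤ t := le_of_lt ht
    calc |(w' t)^n| = |w' t|^n := by rw [abs_pow]
    _ ≤ (M'/t)^n := pow_le_pow_left₀ (abs_nonneg _) (hM' t ht1) n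
    _ ≤ M'^n * t ^ (-(3:ℝ)/2) := hpowt M' t hM'0 ht1
  have hIB : IntegrableOn (fun t => |B t| ^ n) (Ioi (1:ℝ)) := by
    refine ichp_integrable (c := (M'+M)^n) (e := -(3:ℝ)/2) (by norm_num)
      ((hBcont.mono (fun x hx => le_of_lt (mem_Ioi.mp hx))).abs.pow n) ?_
    intro t ht
    have ht1 : (1:ℝ) ≤ t := le_of_lt ht
    calc |(|B t|)^n| = |B t|^n := by rw [abs_pow, abs_abs]
    _ ≤ ((M'+M)/t)^n := pow_le_pow_left₀ (abs_nonneg _) (hBb t ht1) n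
    _ ≤ (M'+M)^n * t ^ (-(3:ℝ)/2) := hpowt (M'+M) t (by linarith) ht1
  have hIwt : IntegrableOn (fun t => (w t / t) ^ n) (Ioi (1:ℝ)) := by
    refine ichp_integrable (c := M^n) (e := -(3:ℝ)/2) (by norm_num)
      (((hwc.continuousOn.div continuousOn_id (fun t ht => by
          have h1 : (1:ℝ) ≤ t := mem_Ici.mp ht
          intro h
          have h2 : t = 0 := h
          linarith)).pow n).mono
        (fun x hx => le_of_lt (mem_Ioi.mp hx))) ?_
    intro t ht
    have ht1 : (1:ℝ) ≤ t := le_of_lt ht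
    have ht0 : (0:ℝ) < t := by linarith
    have hw0 := hwnn t ht1
    have h1 : |w t / t| ≤ M / t := by
      rw [abs_of_nonneg (by positivity)]
      exact (div_le_div_iff_of_pos_right ht0).mpr (hM t ht1)
    calc |(w t / t)^n| = |w t / t|^n := by rw [abs_pow]
    _ ≤ (M/t)^n := pow_le_pow_left₀ (abs_nonneg _) h1 n
    _ ≤ M^n * t ^ (-(3:ℝ)/2) := hpowt M t hM0 ht1
  have hIA : IntegrableOn (fun t => (c * (w t / t)) ^ n) (Ioi (1:ℝ)) := by
    have h1 : (fun t => (c * (w t / t)) ^ n) = fun t => c ^ n * (w t / t) ^ n := by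
      funext t; rw [mul_pow]
    rw [h1]
    exact hIwt.const_mul _
  -- cross term
  set g : ℝ → ℝ := fun t => (v t) ^ n with hg_def
  set g' : ℝ → ℝ := fun t => (n : ℝ) * (v t) ^ (n-1) * v' t with hg'_def
  have hgderiv : ∀ t ∈ Ioi (1:ℝ), HasDerivAt g (g' t) t := by
    intro t ht
    have ht0 : (0:ℝ) < t := lt_trans one_pos (mem_Ioi.mp ht)
    exact (hvderiv t ht0).pow n
  have hvb : ∀ t ∈ Ici (1:ℝ), |v t| ≤ M * t ^ (-c) := by
    intro t ht
    have ht1 : (1:ℝ) ≤ t := ht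
    have ht0 : (0:ℝ) < t := by linarith
    have hw0 := hwnn t ht
    have h1 : |v t| = w t * t ^ (-c) := by
      rw [hv_def, abs_of_nonneg (by positivity)]
    rw [h1]
    exact mul_le_mul_of_nonneg_right (hM t ht) (by positivity)
  have hvb1 : ∀ t ∈ Ici (1:ℝ), |v t| ≤ M := by
    intro t ht
    have ht1 : (1:ℝ) ≤ t := ht
    refine le_trans (hvb t ht) ?_
    have h1 : t ^ (-c) ≤ 1 := Real.rpow_le_one_of_one_le_of_nonpos ht1 (by linarith)
    nlinarith
  have hv'b : ∀ t ∈ Ici (1:ℝ), |v' t| ≤ (M' + M) * t ^ (-(3:ℝ)/2) := by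
    intro t ht
    have ht1 : (1:ℝ) ≤ t := ht
    have ht0 : (0:ℝ) < t := by linarith
    rw [hv'B t ht0, abs_mul, abs_of_nonneg (Real.rpow_nonneg ht0.le _)]
    calc t ^ (-c) * |B t| ≤ t ^ (-(1:ℝ)/2) * ((M' + M)/t) := by
          apply mul_le_mul (hrple t ht1 _ _ (by linarith)) (hBb t ht1) (abs_nonneg _)
            (Real.rpow_nonneg ht0.le _)
    _ = (M' + M) * (t ^ (-(1:ℝ)/2) * t ^ (-(1:ℝ))) := by
          rw [Real.rpow_neg_one]; field_simp
    _ = (M' + M) * t ^ (-(3:ℝ)/2) := by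
          rw [← Real.rpow_add ht0]; norm_num
  have hIg' : IntegrableOn g' (Ioi (1:ℝ)) := by
    refine ichp_integrable (c := (n:ℝ) * M^(n-1) * (M'+M)) (e := -(3:ℝ)/2) (by norm_num)
      ((continuousOn_const.mul ((hvcont.pow (n-1)).mono (fun x hx => le_of_lt (mem_Ioi.mp hx)))).mul
        (hv'cont.mono (fun x hx => le_of_lt (mem_Ioi.mp hx)))) ?_
    intro t ht
    have ht1 : (1:ℝ) ≤ t := le_of_lt ht
    have h1 : |v t| ^ (n-1) ≤ M^(n-1) := pow_le_pow_left₀ (abs_nonneg _) (hvb1 t ht1) _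
    calc |g' t| = (n:ℝ) * |v t|^(n-1) * |v' t| := by
          rw [hg'_def, abs_mul, abs_mul, abs_pow, Nat.abs_cast]
    _ ≤ ((n:ℝ) * M^(n-1)) * ((M'+M) * t ^ (-(3:ℝ)/2)) := by
          apply mul_le_mul _ (hv'b t ht1) (abs_nonneg _) (by positivity)
          exact mul_le_mul_of_nonneg_left h1 (by positivity)
    _ = (n:ℝ) * M^(n-1) * (M'+M) * t ^ (-(3:ℝ)/2) := by ring
  have hgcont : ContinuousOn g (Ici 1) := hvcont.pow n
  have hgtend : Filter.Tendsto g Filter.atTop (nhds 0) := by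
    have hb : Filter.Tendsto (fun t : ℝ => M^n * t ^ (-((n:ℝ)-1))) Filter.atTop (nhds 0) := by
      have h1 := (tendsto_rpow_neg_atTop (by linarith : (0:ℝ) < (n:ℝ)-1)).const_mul (M^n)
      simpa using h1
    refine squeeze_zero_norm' ?_ hb
    filter_upwards [Filter.eventually_ge_atTop (1:ℝ)] with t ht
    have ht0 : (0:ℝ) < t := by linarith
    have h1 : ‖g t‖ = |v t| ^ n := by rw [hg_def, Real.norm_eq_abs, abs_pow]
    rw [h1]
    calc |v t| ^ n ≤ (M * t ^ (-c))^n := pow_le_pow_left₀ (abs_nonneg _) (hvb t ht) n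
    _ = M^n * (t ^ (-c))^n := by rw [mul_pow]
    _ = M^n * t ^ (-((n:ℝ)-1)) := by
          rw [← Real.rpow_natCast (t ^ (-c)) n, ← Real.rpow_mul ht0.le]
          congr 2
          rw [show -c * (n:ℝ) = -(c * n) by ring, hcn]
  have hcross : ∫ t in Ioi (1:ℝ), g' t = 0 := by
    have h := integral_Ioi_of_hasDerivAt_of_tendsto
      (hgcont 1 self_mem_Ici) hgderiv hIg' hgtend
    rw [h, hg_def]
    simp [hv_def, hw1, zero_pow (by omega : n ≠ 0)]
  -- step 1
  have hg'eq : ∀ t ∈ Ioi (1:ℝ), c^(n-1) * g' t = (n:ℝ) * (c * (w t / t))^(n-1) * B t := by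
    intro t ht
    have ht1 : (1:ℝ) < t := ht
    have ht0 : (0:ℝ) < t := by linarith
    have key : (t ^ (-c))^(n-1) * t ^ (-c) = ((t:ℝ)^(n-1))⁻¹ := by
      have e1 : (t ^ (-c))^(n-1) * t ^ (-c) = (t ^ (-c))^((n-1)+1) := (pow_succ _ _).symm
      have e2 : (n-1)+1 = n := by omega
      rw [e1, e2, ← Real.rpow_natCast (t ^ (-c)) n, ← Real.rpow_mul ht0.le,
        show -c * (n:ℝ) = -(c * n) by ring, hcn, Real.rpow_neg ht0.le, hcastn1,
        Real.rpow_natCast]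
    have htn : ((t:ℝ)^(n-1)) ≠ 0 := by positivity
    calc c^(n-1) * g' t
        = (n:ℝ) * c^(n-1) * (w t)^(n-1) * ((t ^ (-c))^(n-1) * t ^ (-c)) * B t := by
          show c^(n-1) * ((n:ℝ) * (w t * t ^ (-c)) ^ (n-1) * v' t) = _
          rw [hv'B t ht0, mul_pow]
          ring
    _ = (n:ℝ) * c^(n-1) * (w t)^(n-1) * ((t:ℝ)^(n-1))⁻¹ * B t := by rw [key]
    _ = (n:ℝ) * (c * (w t / t))^(n-1) * B t := by
          rw [mul_pow, div_pow, div_eq_mul_inv]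
          ring
  have hS_le : ∀ t ∈ Ioi (1:ℝ),
      (c*(w t/t))^n + c^(n-1) * g' t + |B t|^n ≤ (w' t)^n := by
    intro t ht
    have ht1 : (1:ℝ) ≤ t := le_of_lt ht
    have hab : c*(w t/t) + B t = w' t := by simp only [hB_def]; ring
    have h := ichp_pow_ineq hn (hAb t ht1).1 (by rw [hab]; exact hw'pos t ht)
    rw [hab] at h
    rw [hg'eq t ht]
    linarith
  have hIS : IntegrableOn
      (fun t => (c*(w t/t))^n + c^(n-1) * g' t + |B t|^n) (Ioi (1:ℝ)) :=
    (hIA.add (hIg'.const_mul _)).add hIB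
  have hmono := setIntegral_mono_on hIS hIw' measurableSet_Ioi hS_le
  have hsplit : ∫ t in Ioi (1:ℝ), ((c*(w t/t))^n + c^(n-1) * g' t + |B t|^n)
      = c^n * (∫ t in Ioi (1:ℝ), (w t/t)^n) + c^(n-1) * (∫ t in Ioi (1:ℝ), g' t) + K := by
    rw [integral_add (f := fun t => (c*(w t/t))^n + c^(n-1) * g' t)
        (g := fun t => |B t|^n) (hIA.add (hIg'.const_mul (c^(n-1)))) hIB,
      integral_add (f := fun t => (c*(w t/t))^n) (g := fun t => c^(n-1) * g' t) hIA
        (hIg'.const_mul (c^(n-1))), integral_const_mul]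
    congr 2
    rw [← integral_const_mul]
    refine setIntegral_congr_fun measurableSet_Ioi fun t _ => ?_
    rw [mul_pow]
  have hstep1 : K ≤ (∫ t in Ioi (1:ℝ), (w' t)^n) - c^n * ∫ t in Ioi (1:ℝ), (w t/t)^n := by
    rw [hsplit, hcross] at hmono
    linarith
  have hK0 : 0 ≤ K := setIntegral_nonneg measurableSet_Ioi (fun t _ => by positivity)
  -- step 2
  have hstep2 : ∀ t ∈ Ioi (1:ℝ), |v t| ≤ K ^ (1/(n:ℝ)) * Real.log t ^ c := by
    intro t ht
    have ht1 : (1:ℝ) < t := ht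
    have ht0 : (0:ℝ) < t := by linarith
    have hlog0 : 0 ≤ Real.log t := Real.log_nonneg (le_of_lt ht1)
    have huIcc : uIcc (1:ℝ) t = Icc 1 t := uIcc_of_le (le_of_lt ht1)
    have hsub : Ioc (1:ℝ) t ⊆ Ici 1 := fun x hx => le_of_lt hx.1
    have hftc : ∫ τ in (1:ℝ)..t, v' τ = v t - v 1 := by
      apply intervalIntegral.integral_eq_sub_of_hasDerivAt
      · intro τ hτ
        rw [huIcc] at hτ
        exact hvderiv τ (by linarith [hτ.1])
      · exact (hv'cont.mono (by rw [huIcc]; exact fun x hx => hx.1)).intervalIntegrable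
    have hv1 : v 1 = 0 := by simp [hv_def, hw1]
    have habs : |v t| ≤ ∫ τ in Ioc (1:ℝ) t, |v' τ| := by
      have h1 : |v t| = |∫ τ in (1:ℝ)..t, v' τ| := by rw [hftc, hv1, sub_zero]
      rw [h1, ← intervalIntegral.integral_of_le (le_of_lt ht1)]
      exact intervalIntegral.abs_integral_le_integral_abs (le_of_lt ht1)
    -- Hölder
    set μt := volume.restrict (Ioc (1:ℝ) t) with hμt
    haveI : IsFiniteMeasure μt :=
      ⟨by rw [hμt, Measure.restrict_apply_univ]; exact measure_Ioc_lt_top⟩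
    have hconj : ((n:ℝ)).HolderConjugate ((n:ℝ)/((n:ℝ)-1)) :=
      (Real.holderConjugate_iff).mpr ⟨by linarith, by rw [inv_div]; field_simp; ring⟩
    set f1 : ℝ → ℝ := fun τ => |v' τ| * τ ^ c with hf1_def
    set f2 : ℝ → ℝ := fun τ => τ ^ (-c) with hf2_def
    have hf1B : ∀ τ ∈ Ioc (1:ℝ) t, f1 τ = |B τ| := by
      intro τ hτ
      have hτ0 : (0:ℝ) < τ := lt_trans one_pos hτ.1
      rw [hf1_def]
      show |v' τ| * τ ^ c = |B τ|
      rw [hv'B τ hτ0, abs_mul, abs_of_nonneg (Real.rpow_nonneg hτ0.le _)]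
      rw [mul_comm (τ ^ (-c)) |B τ|, mul_assoc, ← Real.rpow_add hτ0]
      norm_num
    have hmem1 : MemLp f1 (ENNReal.ofReal ((n:ℝ))) μt := by
      refine MemLp.of_bound
        (((hv'cont.abs.mul (hrpowc c)).mono hsub).aestronglyMeasurable measurableSet_Ioc)
        ((M'+M) * t) ?_
      rw [hμt, ae_restrict_iff' measurableSet_Ioc]
      refine ae_of_all _ fun τ hτ => ?_
      have hτ1 : (1:ℝ) ≤ τ := le_of_lt hτ.1
      have hτ0 : (0:ℝ) < τ := by linarith
      have h1 : |v' τ| ≤ M' + M := by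
        refine le_trans (hv'b τ hτ1) ?_
        have h2 : τ ^ (-(3:ℝ)/2) ≤ 1 := Real.rpow_le_one_of_one_le_of_nonpos hτ1 (by norm_num)
        nlinarith
      have h2 : τ ^ c ≤ t := by
        calc τ ^ c ≤ τ ^ (1:ℝ) := hrple τ hτ1 _ _ hc1
        _ = τ := Real.rpow_one τ
        _ ≤ t := hτ.2
      rw [Real.norm_eq_abs, hf1_def]
      show |(|v' τ| * τ ^ c)| ≤ (M' + M) * t
      rw [abs_mul, abs_abs, abs_of_nonneg (Real.rpow_nonneg hτ0.le _)]
      exact mul_le_mul h1 h2 (Real.rpow_nonneg hτ0.le _) (by linarith)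
    have hmem2 : MemLp f2 (ENNReal.ofReal ((n:ℝ)/((n:ℝ)-1))) μt := by
      refine MemLp.of_bound
        (((hrpowc (-c)).mono hsub).aestronglyMeasurable measurableSet_Ioc) 1 ?_
      rw [hμt, ae_restrict_iff' measurableSet_Ioc]
      refine ae_of_all _ fun τ hτ => ?_
      have hτ1 : (1:ℝ) ≤ τ := le_of_lt hτ.1
      rw [Real.norm_eq_abs, hf2_def]
      show |τ ^ (-c)| ≤ 1
      rw [abs_of_nonneg (Real.rpow_nonneg (by linarith) _)]
      exact Real.rpow_le_one_of_one_le_of_nonpos hτ1 (by linarith)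
    have hholder := integral_mul_le_Lp_mul_Lq_of_nonneg hconj
      (f := f1) (g := f2)
      (by rw [hμt]
          refine (ae_restrict_iff' measurableSet_Ioc).mpr (ae_of_all _ fun τ hτ => ?_)
          have hτ0 : (0:ℝ) < τ := lt_trans one_pos hτ.1
          show 0 ≤ |v' τ| * τ ^ c
          positivity)
      (by rw [hμt]
          refine (ae_restrict_iff' measurableSet_Ioc).mpr (ae_of_all _ fun τ hτ => ?_)
          have hτ0 : (0:ℝ) < τ := lt_trans one_pos hτ.1
          show 0 ≤ τ ^ (-c)
          positivity)
      hmem1 hmem2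
    -- identify the three factors
    have hLHS : ∫ τ, f1 τ * f2 τ ∂μt = ∫ τ in Ioc (1:ℝ) t, |v' τ| := by
      rw [hμt]
      refine setIntegral_congr_fun measurableSet_Ioc fun τ hτ => ?_
      have hτ0 : (0:ℝ) < τ := lt_trans one_pos hτ.1
      rw [hf1B τ hτ, hf2_def]
      show |B τ| * τ ^ (-c) = |v' τ|
      rw [hv'B τ hτ0, abs_mul, abs_of_nonneg (Real.rpow_nonneg hτ0.le _)]
      ring
    have hT1 : ∫ τ, f1 τ ^ ((n:ℝ)) ∂μt = ∫ τ in Ioc (1:ℝ) t, |B τ| ^ n := by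
      rw [hμt]
      refine setIntegral_congr_fun measurableSet_Ioc fun τ hτ => ?_
      rw [hf1B τ hτ, Real.rpow_natCast]
    have hT1le : ∫ τ in Ioc (1:ℝ) t, |B τ| ^ n ≤ K := by
      refine setIntegral_mono_set hIB ?_ ?_
      · refine (ae_restrict_iff' measurableSet_Ioi).mpr (ae_of_all _ fun τ hτ => by positivity)
      · refine Filter.Eventually.of_forall fun τ hτ => hτ.1
    have hT2 : ∫ τ, f2 τ ^ ((n:ℝ)/((n:ℝ)-1)) ∂μt = Real.log t := by
      rw [hμt]
      have h1 : ∀ τ ∈ Ioc (1:ℝ) t, f2 τ ^ ((n:ℝ)/((n:ℝ)-1)) = τ⁻¹ := by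
        intro τ hτ
        have hτ0 : (0:ℝ) < τ := lt_trans one_pos hτ.1
        rw [hf2_def]
        show (τ ^ (-c)) ^ ((n:ℝ)/((n:ℝ)-1)) = τ⁻¹
        rw [← Real.rpow_mul hτ0.le (-c)]
        have h2 : -c * ((n:ℝ)/((n:ℝ)-1)) = -1 := by
          rw [hc_def]; field_simp
        rw [h2, Real.rpow_neg_one]
      rw [setIntegral_congr_fun measurableSet_Ioc h1,
        ← intervalIntegral.integral_of_le (le_of_lt ht1),
        integral_inv_of_pos one_pos ht0, div_one]
    rw [hLHS, hT1, hT2] at hholder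
    have hend : (∫ τ in Ioc (1:ℝ) t, |B τ| ^ n) ^ (1/(n:ℝ)) * Real.log t ^ (1/((n:ℝ)/((n:ℝ)-1)))
        ≤ K ^ (1/(n:ℝ)) * Real.log t ^ c := by
      have he : 1/((n:ℝ)/((n:ℝ)-1)) = c := by rw [one_div_div, hc_def]
      rw [he]
      refine mul_le_mul_of_nonneg_right ?_ (Real.rpow_nonneg hlog0 _)
      exact Real.rpow_le_rpow (setIntegral_nonneg measurableSet_Ioc fun τ _ => by positivity)
        hT1le (by positivity)
    calc |v t| ≤ ∫ τ in Ioc (1:ℝ) t, |v' τ| := habs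
    _ ≤ _ := hholder
    _ ≤ K ^ (1/(n:ℝ)) * Real.log t ^ c := hend
  -- step 3
  set Cinv : ℝ := ∫ t in Ioi (1:ℝ), (Real.log t) ^ p * t ^ (-(L+2)) with hCinv_def
  have hIJ3 : IntegrableOn (fun t => (w t) ^ q / t ^ α) (Ioi (1:ℝ)) := by
    refine ichp_integrable (c := M ^ q) (e := -α) (by linarith) ?_ ?_
    · refine ContinuousOn.div (hwc.continuousOn.rpow_const fun t _ => Or.inr hq.le)
        ((hrpowc α).mono (fun x hx => le_of_lt (mem_Ioi.mp hx))) ?_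
      intro t ht
      have ht0 : (0:ℝ) < t := lt_trans one_pos (mem_Ioi.mp ht)
      exact (Real.rpow_pos_of_pos ht0 α).ne'
    · intro t ht
      have ht1 : (1:ℝ) ≤ t := le_of_lt ht
      have ht0 : (0:ℝ) < t := by linarith
      have hw0 := hwnn t ht1
      have h1 : (w t) ^ q ≤ M ^ q := Real.rpow_le_rpow hw0 (hM t ht1) hq.le
      have h2 : t ^ (-α) = (t ^ α)⁻¹ := Real.rpow_neg ht0.le α
      rw [abs_of_nonneg (by positivity)]
      rw [div_eq_mul_inv, ← h2]
      exact mul_le_mul_of_nonneg_right h1 (by positivity)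
  have hstep3 : (∫ t in Ioi (1:ℝ), (w t) ^ q / t ^ α) ≤ K ^ (q/(n:ℝ)) * Cinv := by
    rw [hCinv_def, ← integral_const_mul]
    refine setIntegral_mono_on hIJ3
      ((ichp_cinv_integrable hp0 hL).const_mul _) measurableSet_Ioi ?_
    intro t ht
    have ht1 : (1:ℝ) < t := ht
    have ht0 : (0:ℝ) < t := by linarith
    have hlog0 : 0 ≤ Real.log t := Real.log_nonneg (le_of_lt ht1)
    have hv0 : 0 ≤ v t := by
      rw [hv_def]
      have := hwpos t ht
      positivity
    have hwv : w t = v t * t ^ c := by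
      rw [hv_def, mul_assoc, ← Real.rpow_add ht0]
      norm_num
    have h1 : (w t) ^ q = (v t) ^ q * t ^ p := by
      rw [hwv, Real.mul_rpow hv0 (Real.rpow_nonneg ht0.le _),
        ← Real.rpow_mul ht0.le, hpqc]
      ring_nf
    have h2 : (v t) ^ q ≤ K ^ (q/(n:ℝ)) * (Real.log t) ^ p := by
      have h3 : (v t) ^ q ≤ (K ^ (1/(n:ℝ)) * Real.log t ^ c) ^ q := by
        refine Real.rpow_le_rpow hv0 ?_ hq.le
        calc v t ≤ |v t| := le_abs_self _
        _ ≤ _ := hstep2 t ht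
      refine le_trans h3 ?_
      rw [Real.mul_rpow (Real.rpow_nonneg hK0 _) (Real.rpow_nonneg hlog0 _),
        ← Real.rpow_mul hK0, ← Real.rpow_mul hlog0, hpqc]
      have e1 : 1/(n:ℝ) * q = q / n := by ring
      have e2 : c * q = q * c := by ring
      rw [e1, e2]
    have h4 : t ^ p / t ^ α = t ^ (-(L+2)) := by
      rw [← Real.rpow_sub ht0]
      congr 1
      rw [hα]
      ring
    calc (w t) ^ q / t ^ α = (v t) ^ q * (t ^ p / t ^ α) := by rw [h1]; ring
    _ = (v t) ^ q * t ^ (-(L+2)) := by rw [h4]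
    _ ≤ (K ^ (q/(n:ℝ)) * (Real.log t) ^ p) * t ^ (-(L+2)) := by
          exact mul_le_mul_of_nonneg_right h2 (Real.rpow_nonneg ht0.le _)
    _ = K ^ (q/(n:ℝ)) * ((Real.log t) ^ p * t ^ (-(L+2))) := by ring
  -- final assembly
  set Cst : ℝ := (L + 1) ^ (p + 1) / Real.Gamma (p + 1) with hCst_def
  have hL1 : (0:ℝ) < L + 1 := by linarith
  have hCst0 : 0 < Cst := by
    rw [hCst_def]
    exact div_pos (Real.rpow_pos_of_pos hL1 _) (Real.Gamma_pos_of_pos (by linarith))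
  have hCinv_val : Cinv = Cst⁻¹ := by
    rw [hCinv_def, ichp_cinv_val hp0 hL, hCst_def]
    rw [one_div, Real.inv_rpow hL1.le]
    field_simp
  have hJ30 : 0 ≤ ∫ t in Ioi (1:ℝ), (w t) ^ q / t ^ α := by
    refine setIntegral_nonneg measurableSet_Ioi fun t ht => ?_
    have ht0 : (0:ℝ) < t := lt_trans one_pos (mem_Ioi.mp ht)
    have := hwpos t ht
    positivity
  have hfinal : Cst ^ ((n:ℝ)/q) * (∫ t in Ioi (1:ℝ), (w t) ^ q / t ^ α) ^ ((n:ℝ)/q) ≤ K := by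
    have h1 : (∫ t in Ioi (1:ℝ), (w t) ^ q / t ^ α) ^ ((n:ℝ)/q)
        ≤ (K ^ (q/(n:ℝ)) * Cst⁻¹) ^ ((n:ℝ)/q) := by
      refine Real.rpow_le_rpow hJ30 ?_ (by positivity)
      rw [← hCinv_val]
      exact hstep3
    have h2 : (K ^ (q/(n:ℝ)) * Cst⁻¹) ^ ((n:ℝ)/q) = K * (Cst ^ ((n:ℝ)/q))⁻¹ := by
      rw [Real.mul_rpow (Real.rpow_nonneg hK0 _) (inv_nonneg.mpr hCst0.le),
        ← Real.rpow_mul hK0, Real.inv_rpow hCst0.le]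
      congr 1
      rw [show q/(n:ℝ) * ((n:ℝ)/q) = 1 by field_simp, Real.rpow_one]
    have h3 : 0 ≤ Cst ^ ((n:ℝ)/q) := (Real.rpow_pos_of_pos hCst0 _).le
    calc Cst ^ ((n:ℝ)/q) * (∫ t in Ioi (1:ℝ), (w t) ^ q / t ^ α) ^ ((n:ℝ)/q)
        ≤ Cst ^ ((n:ℝ)/q) * (K * (Cst ^ ((n:ℝ)/q))⁻¹) := by
          rw [← h2]
          exact mul_le_mul_of_nonneg_left h1 h3
    _ = K := by
          field_simp
  calc Cst ^ ((n:ℝ)/q) * (∫ t in Ioi (1:ℝ), (w t) ^ q / t ^ α) ^ ((n:ℝ)/q)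
      ≤ K := hfinal
  _ ≤ _ := hstep1


lemma ichp_radial (n : ℕ) (hn : 2 ≤ n) {R : ℝ} (hR : 0 < R) (f : ℝ → ℝ)
    (hf : ∀ r, R ≤ r → f r = 0) :
    ∫ x in Metric.ball (0 : EuclideanSpace ℝ (Fin n)) R, f ‖x‖
      = (n : ℝ) * (volume (Metric.ball (0 : EuclideanSpace ℝ (Fin n)) 1)).toReal
        * ∫ t in Ioi (1:ℝ), (R * Real.exp (1-t))
            * ((R * Real.exp (1-t))^(n-1) * f (R * Real.exp (1-t))) := by
  haveI : Nonempty (Fin n) := ⟨⟨0, by omega⟩⟩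
  have hball : ∫ x in Metric.ball (0 : EuclideanSpace ℝ (Fin n)) R, f ‖x‖
      = ∫ x : EuclideanSpace ℝ (Fin n), f ‖x‖ := by
    apply setIntegral_eq_integral_of_forall_compl_eq_zero
    intro x hx
    apply hf
    rw [Metric.mem_ball, dist_zero_right] at hx
    exact not_lt.mp hx
  have hdim : Module.finrank ℝ (EuclideanSpace ℝ (Fin n)) = n := by
    rw [finrank_euclideanSpace, Fintype.card_fin]
  rw [hball, integral_fun_norm_addHaar volume f, hdim, nsmul_eq_mul, smul_eq_mul]
  have hIoo : ∫ y in Ioi (0:ℝ), y ^ (n-1) • f y = ∫ y in Ioo (0:ℝ) R, y^(n-1) * f y := by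
    rw [← integral_indicator measurableSet_Ioi, ← integral_indicator measurableSet_Ioo]
    congr 1
    funext y
    by_cases h1 : y ∈ Ioo (0:ℝ) R
    · rw [indicator_of_mem h1, indicator_of_mem (mem_Ioi.mpr h1.1), smul_eq_mul]
    · rw [indicator_of_notMem h1]
      by_cases h2 : y ∈ Ioi (0:ℝ)
      · rw [indicator_of_mem h2, smul_eq_mul]
        have h3 : R ≤ y := by
          by_contra h4
          exact h1 ⟨mem_Ioi.mp h2, not_le.mp h4⟩
        rw [hf y h3, mul_zero]
      · rw [indicator_of_notMem h2]
  rw [hIoo, ichp_subst_R hR (fun r => r^(n-1) * f r)]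
  simp only [measureReal_def]
  ring


end ICHP_Aux

set_option maxHeartbeats 2000000 in
open Set Real in
/-- Euclidean case of the improved critical Hardy inequality for radial functions:
for `n ≥ 2`, `q > 0`, `-1 < L < n-2` with `α := q(n-1)/n + L + 2 ≤ n`, and every
positive non-increasing smooth radial function `u` (given by its radial profile)
compactly supported in `B(0,R) ⊆ ℝⁿ`, the critical Hardy deficit dominates a
weighted `L^q` norm, with explicit constant expressed via the Gamma function. -/
theorem improved_critical_hardy_radial (n : ℕ) (hn : 2 ≤ n) (R : ℝ) (hR : 0 < R)
    (q L α : ℝ) (hq : 0 < q) (hL : -1 < L) (hL' : L < (n : ℝ) - 2)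
    (hα : α = q * ((n : ℝ) - 1) / n + L + 2) (hαn : α ≤ (n : ℝ))
    (u : ℝ → ℝ) (hu : ContDiff ℝ (⊤ : ℕ∞) u) (husupp : HasCompactSupport u)
    (hsupp : tsupport u ⊆ Set.Iic R) (huR : u R = 0)
    (hpos : ∀ r ∈ Set.Ico (0 : ℝ) R, 0 < u r)
    (hmono : AntitoneOn u (Set.Icc 0 R))
    (C : ℝ) (hC : C = (L + 1) ^ (q * ((n : ℝ) - 1) / n + 1)
        / Real.Gamma (q * ((n : ℝ) - 1) / n + 1)) :
    (∫ s in Set.Ioo (0 : ℝ) 1, s ^ L * (Real.log (1 / s)) ^ (q * ((n : ℝ) - 1) / n)) = C⁻¹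
    ∧
    (∫ x in Metric.ball (0 : EuclideanSpace ℝ (Fin n)) R, |deriv u ‖x‖| ^ (n : ℝ))
        - (((n : ℝ) - 1) / n) ^ (n : ℝ) *
            (∫ x in Metric.ball (0 : EuclideanSpace ℝ (Fin n)) R,
              |u ‖x‖| ^ (n : ℝ)
                / (‖x‖ ^ (n : ℝ) * (Real.log (R * Real.exp 1 / ‖x‖)) ^ (n : ℝ)))
      ≥ ((n : ℝ) * (volume (Metric.ball (0 : EuclideanSpace ℝ (Fin n)) 1)).toReal)
            ^ (1 - (n : ℝ) / q)
          * C ^ ((n : ℝ) / q)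
          * (∫ x in Metric.ball (0 : EuclideanSpace ℝ (Fin n)) R,
              |u ‖x‖| ^ q
                / (‖x‖ ^ (n : ℝ) * (Real.log (R * Real.exp 1 / ‖x‖)) ^ α)) ^ ((n : ℝ) / q) := by
  have hn0 : (0:ℝ) < n := by positivity
  have hn2 : (2:ℝ) ≤ n := by exact_mod_cast hn
  have hnne : (n:ℝ) ≠ 0 := by positivity
  have hp0 : 0 < q * ((n : ℝ) - 1) / n := by
    have : (0:ℝ) < (n:ℝ) - 1 := by linarith
    positivity
  have hL1 : (0:ℝ) < L + 1 := by linarith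
  have hΓ0 : 0 < Real.Gamma (q * ((n : ℝ) - 1) / n + 1) :=
    Real.Gamma_pos_of_pos (by linarith)
  have hC0 : 0 < C := by
    rw [hC]
    exact div_pos (Real.rpow_pos_of_pos hL1 _) hΓ0
  -- conjunct 1
  have hconj1 : (∫ s in Set.Ioo (0 : ℝ) 1,
      s ^ L * (Real.log (1 / s)) ^ (q * ((n : ℝ) - 1) / n)) = C⁻¹ := by
    rw [ichp_conj1 hp0 hL, hC, one_div, Real.inv_rpow hL1.le]
    field_simp
  refine ⟨hconj1, ?_⟩
  -- basic facts about u
  have huc : Continuous u := hu.continuous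
  have hudc : Continuous (deriv u) := hu.continuous_deriv (by simp)
  have hu0 : ∀ r, R ≤ r → u r = 0 := by
    intro r hr
    rcases eq_or_lt_of_le hr with h | h
    · rw [← h, huR]
    · refine image_eq_zero_of_notMem_tsupport fun hmem => ?_
      have := hsupp hmem
      simp only [mem_Iic] at this
      linarith
  have hd0 : ∀ r, R ≤ r → deriv u r = 0 := by
    have h1 : EqOn (deriv u) (fun _ => (0:ℝ)) (Ioi R) := by
      intro r hr
      have h2 : u =ᶠ[nhds r] fun _ => (0:ℝ) := by
        filter_upwards [IsOpen.mem_nhds isOpen_Ioi hr] with z hz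
        exact hu0 z (le_of_lt hz)
      rw [h2.deriv_eq]
      exact deriv_const r 0
    have h2 := h1.closure hudc continuous_const
    rw [closure_Ioi] at h2
    intro r hr
    exact h2 hr
  have hdnp : ∀ r ∈ Ioo (0:ℝ) R, deriv u r ≤ 0 := by
    intro r hr
    have hd : HasDerivAt u (deriv u r) r :=
      ((hu.differentiable (by simp)) r).hasDerivAt
    rw [hasDerivAt_iff_tendsto_slope] at hd
    have h2 : Filter.Tendsto (slope u r) (nhdsWithin r (Ioi r)) (nhds (deriv u r)) :=
      hd.mono_left (nhdsWithin_mono r (fun z hz => ne_of_gt (mem_Ioi.mp hz)))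
    refine le_of_tendsto h2 ?_
    filter_upwards [Ioo_mem_nhdsGT_of_mem ⟨le_refl r, hr.2⟩] with z hz
    have hzR : z ∈ Icc (0:ℝ) R := ⟨by linarith [hr.1, hz.1], le_of_lt hz.2⟩
    have hrR : r ∈ Icc (0:ℝ) R := ⟨le_of_lt hr.1, le_of_lt hr.2⟩
    have huz : u z ≤ u r := hmono hrR hzR (le_of_lt hz.1)
    rw [slope_def_field]
    apply div_nonpos_of_nonpos_of_nonneg
    · linarith
    · linarith [hz.1]
  -- the transplanted function w
  set r : ℝ → ℝ := fun t => R * Real.exp (1 - t) with hr_def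
  have hr_pos : ∀ t : ℝ, 0 < r t := fun t => by positivity
  have hr_lt : ∀ t : ℝ, 1 < t → r t < R := by
    intro t ht
    have h1 : Real.exp (1 - t) < 1 := Real.exp_lt_one_iff.mpr (by linarith)
    calc r t = R * Real.exp (1-t) := rfl
    _ < R * 1 := by nlinarith
    _ = R := mul_one R
  have hr_le : ∀ t : ℝ, 1 ≤ t → r t ≤ R := by
    intro t ht
    have h1 : Real.exp (1 - t) ≤ 1 := Real.exp_le_one_iff.mpr (by linarith)
    calc r t = R * Real.exp (1-t) := rfl
    _ ≤ R * 1 := by nlinarith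
    _ = R := mul_one R
  set w : ℝ → ℝ := fun t => u (r t) with hw_def
  set w' : ℝ → ℝ := fun t => r t * (-deriv u (r t)) with hw'_def
  have hrderiv : ∀ t : ℝ, HasDerivAt r (-(r t)) t := by
    intro t
    have h1 : HasDerivAt (fun t : ℝ => 1 - t) (-1) t := by
      simpa using (hasDerivAt_id t).const_sub 1
    have h2 : HasDerivAt (fun t : ℝ => R * Real.exp (1 - t))
        (R * (Real.exp (1 - t) * (-1))) t :=
      ((Real.hasDerivAt_exp (1 - t)).comp t h1).const_mul R
    exact h2.congr_deriv (by ring)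
  have hwderiv : ∀ t : ℝ, HasDerivAt w (w' t) t := by
    intro t
    have h1 : HasDerivAt u (deriv u (r t)) (r t) :=
      ((hu.differentiable (by simp)) (r t)).hasDerivAt
    have h2 := h1.comp t (hrderiv t)
    exact h2.congr_deriv (by rw [hw'_def]; ring)
  have hwc : Continuous w := huc.comp (by continuity)
  have hw'c : Continuous w' := by
    have : Continuous r := by continuity
    exact (this.mul ((hudc.comp this).neg))
  have hw1 : w 1 = 0 := by
    have : r 1 = R := by
      rw [hr_def]
      norm_num
    rw [hw_def]
    show u (r 1) = 0
    rw [this, huR]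
  have hwpos : ∀ t ∈ Ioi (1:ℝ), 0 ≤ w t := by
    intro t ht
    exact (hpos (r t) ⟨(hr_pos t).le, hr_lt t ht⟩).le
  have hw'pos : ∀ t ∈ Ioi (1:ℝ), 0 ≤ w' t := by
    intro t ht
    have h1 := hdnp (r t) ⟨hr_pos t, hr_lt t ht⟩
    have h2 := hr_pos t
    rw [hw'_def]
    show 0 ≤ r t * (-deriv u (r t))
    nlinarith
  -- bounds
  obtain ⟨Cd, hCd⟩ := hudc.bounded_above_of_compact_support husupp.deriv
  have hCd0 : 0 ≤ Cd := le_trans (norm_nonneg _) (hCd 0)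
  have hM0 : 0 ≤ u 0 := (hpos 0 ⟨le_rfl, hR⟩).le
  have hMw : ∀ t ∈ Ici (1:ℝ), w t ≤ u 0 := by
    intro t ht
    rcases eq_or_lt_of_le (show (1:ℝ) ≤ t from ht) with h | h
    · rw [← h, hw1]; exact hM0
    · exact hmono ⟨le_rfl, hR.le⟩ ⟨(hr_pos t).le, (hr_le t ht)⟩ (hr_pos t).le
  have hM'w : ∀ t ∈ Ici (1:ℝ), |w' t| ≤ (R * Cd) / t := by
    intro t ht
    have ht1 : (1:ℝ) ≤ t := ht
    have ht0 : (0:ℝ) < t := by linarith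
    have h1 : Real.exp (1 - t) ≤ 1 / t := by
      have h2 : t ≤ Real.exp (t - 1) := by
        have := Real.add_one_le_exp (t - 1)
        linarith
      rw [show (1:ℝ) - t = -(t-1) by ring, Real.exp_neg]
      rw [div_eq_mul_inv, one_mul]
      exact inv_anti₀ ht0 h2
    have h2 : |deriv u (r t)| ≤ Cd := by
      have := hCd (r t)
      rwa [Real.norm_eq_abs] at this
    have h3 : |w' t| = r t * |deriv u (r t)| := by
      rw [hw'_def]
      show |r t * (-deriv u (r t))| = r t * |deriv u (r t)|
      rw [abs_mul, abs_of_pos (hr_pos t), abs_neg]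
    rw [h3]
    calc r t * |deriv u (r t)| ≤ (R * (1/t)) * Cd := by
          apply mul_le_mul _ h2 (abs_nonneg _) (by positivity)
          calc r t = R * Real.exp (1-t) := rfl
          _ ≤ R * (1/t) := by nlinarith
    _ = (R * Cd) / t := by ring
  -- identify the three Euclidean integrals
  have hlog : ∀ t : ℝ, Real.log (R * Real.exp 1 / r t) = t := by
    intro t
    have h1 : R * Real.exp 1 / r t = Real.exp t := by
      rw [hr_def]
      show R * Real.exp 1 / (R * Real.exp (1 - t)) = Real.exp t
      rw [mul_div_mul_left _ _ hR.ne', ← Real.exp_sub]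
      norm_num
    rw [h1, Real.log_exp]
  have hrn : ∀ t : ℝ, r t * (r t)^(n-1) = (r t)^n := by
    intro t
    rw [← pow_succ']
    congr 1
    omega
  have hE1 : (∫ x in Metric.ball (0 : EuclideanSpace ℝ (Fin n)) R, |deriv u ‖x‖| ^ (n : ℝ))
      = (n : ℝ) * (volume (Metric.ball (0 : EuclideanSpace ℝ (Fin n)) 1)).toReal
        * ∫ t in Ioi (1:ℝ), (w' t)^n := by
    rw [ichp_radial n hn hR (fun s => |deriv u s| ^ (n:ℝ))
      (fun s hs => by show |deriv u s| ^ (n:ℝ) = 0; rw [hd0 s hs, abs_zero, Real.zero_rpow hnne])]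
    congr 1
    refine setIntegral_congr_fun measurableSet_Ioi fun t ht => ?_
    have h1 := hdnp (r t) ⟨hr_pos t, hr_lt t ht⟩
    show r t * (r t ^ (n-1) * |deriv u (r t)| ^ ((n:ℕ):ℝ)) = w' t ^ n
    rw [Real.rpow_natCast, abs_of_nonpos h1]
    show r t * (r t ^ (n-1) * (-deriv u (r t))^n) = (r t * -deriv u (r t))^n
    have h4 : r t * r t ^ (n - 1) = r t ^ n := hrn t
    calc r t * (r t ^ (n-1) * (-deriv u (r t))^n)
        = (r t * r t ^ (n-1)) * (-deriv u (r t))^n := by ring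
    _ = r t ^ n * (-deriv u (r t))^n := by rw [h4]
    _ = (r t * -deriv u (r t))^n := (mul_pow _ _ n).symm
  have hE2 : (∫ x in Metric.ball (0 : EuclideanSpace ℝ (Fin n)) R,
        |u ‖x‖| ^ (n : ℝ) / (‖x‖ ^ (n : ℝ) * (Real.log (R * Real.exp 1 / ‖x‖)) ^ (n : ℝ)))
      = (n : ℝ) * (volume (Metric.ball (0 : EuclideanSpace ℝ (Fin n)) 1)).toReal
        * ∫ t in Ioi (1:ℝ), (w t / t)^n := by
    rw [ichp_radial n hn hR
      (fun s => |u s| ^ (n:ℝ) / (s ^ (n:ℝ) * (Real.log (R * Real.exp 1 / s)) ^ (n:ℝ)))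
      (fun s hs => by show |u s| ^ (n:ℝ) / _ = 0; rw [hu0 s hs, abs_zero, Real.zero_rpow hnne, zero_div])]
    congr 1
    refine setIntegral_congr_fun measurableSet_Ioi fun t ht => ?_
    have ht1 : (1:ℝ) < t := ht
    have ht0 : (0:ℝ) < t := by linarith
    have hwt0 : 0 ≤ w t := hwpos t ht
    have habs : |u (r t)| = w t := by
      rw [hw_def]
      exact abs_of_nonneg hwt0
    show r t * (r t ^ (n-1) * (|u (r t)| ^ (n:ℝ)
        / (r t ^ (n:ℝ) * Real.log (R * Real.exp 1 / r t) ^ (n:ℝ)))) = (w t / t)^n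
    rw [hlog t, Real.rpow_natCast, Real.rpow_natCast, Real.rpow_natCast, habs, div_pow,
      ← hrn t]
    have h2 : (r t : ℝ) ≠ 0 := (hr_pos t).ne'
    have h3 : (t:ℝ)^n ≠ 0 := by positivity
    field_simp
  have hE3 : (∫ x in Metric.ball (0 : EuclideanSpace ℝ (Fin n)) R,
        |u ‖x‖| ^ q / (‖x‖ ^ (n : ℝ) * (Real.log (R * Real.exp 1 / ‖x‖)) ^ α))
      = (n : ℝ) * (volume (Metric.ball (0 : EuclideanSpace ℝ (Fin n)) 1)).toReal
        * ∫ t in Ioi (1:ℝ), (w t) ^ q / t ^ α := by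
    rw [ichp_radial n hn hR
      (fun s => |u s| ^ q / (s ^ (n:ℝ) * (Real.log (R * Real.exp 1 / s)) ^ α))
      (fun s hs => by show |u s| ^ q / _ = 0; rw [hu0 s hs, abs_zero, Real.zero_rpow hq.ne', zero_div])]
    congr 1
    refine setIntegral_congr_fun measurableSet_Ioi fun t ht => ?_
    have ht1 : (1:ℝ) < t := ht
    have ht0 : (0:ℝ) < t := by linarith
    have hwt0 : 0 ≤ w t := hwpos t ht
    have habs : |u (r t)| = w t := by
      rw [hw_def]
      exact abs_of_nonneg hwt0
    show r t * (r t ^ (n-1) * (|u (r t)| ^ q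
        / (r t ^ (n:ℝ) * Real.log (R * Real.exp 1 / r t) ^ α))) = w t ^ q / t ^ α
    rw [hlog t, Real.rpow_natCast, habs, ← hrn t]
    have h2 : (r t : ℝ) ≠ 0 := (hr_pos t).ne'
    have h3 : (t:ℝ) ^ α ≠ 0 := (Real.rpow_pos_of_pos ht0 α).ne'
    field_simp
  -- apply the 1D core inequality
  have hcore := ichp_core1d n hn q L α hq hL hα w w' hwderiv hwc hw'c hw1 hwpos hw'pos
    (u 0) (R * Cd) hM0 (by positivity) hMw hM'w
  -- assemble
  set ω : ℝ := (n : ℝ) * (volume (Metric.ball (0 : EuclideanSpace ℝ (Fin n)) 1)).toReal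
    with hω_def
  have hω0 : 0 < ω := by
    rw [hω_def]
    have h1 : 0 < volume (Metric.ball (0 : EuclideanSpace ℝ (Fin n)) 1) := by
      haveI : Nonempty (Fin n) := ⟨⟨0, by omega⟩⟩
      exact Metric.measure_ball_pos volume 0 one_pos
    have h2 : (volume (Metric.ball (0 : EuclideanSpace ℝ (Fin n)) 1)).toReal > 0 :=
      ENNReal.toReal_pos h1.ne' measure_ball_lt_top.ne
    positivity
  have hJ30 : 0 ≤ ∫ t in Ioi (1:ℝ), (w t) ^ q / t ^ α := by
    refine setIntegral_nonneg measurableSet_Ioi fun t ht => ?_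
    have ht0 : (0:ℝ) < t := lt_trans one_pos (mem_Ioi.mp ht)
    have := hwpos t ht
    positivity
  rw [ge_iff_le, hE1, hE2, hE3]
  have hrhs : ω ^ (1 - (n:ℝ)/q) * C ^ ((n:ℝ)/q) * (ω * ∫ t in Ioi (1:ℝ), (w t) ^ q / t ^ α) ^ ((n:ℝ)/q)
      = ω * (C ^ ((n:ℝ)/q) * (∫ t in Ioi (1:ℝ), (w t) ^ q / t ^ α) ^ ((n:ℝ)/q)) := by
    rw [Real.mul_rpow hω0.le hJ30]
    have h1 : ω ^ (1 - (n:ℝ)/q) * ω ^ ((n:ℝ)/q) = ω := by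
      rw [← Real.rpow_add hω0]
      norm_num
    calc ω ^ (1 - (n:ℝ)/q) * C ^ ((n:ℝ)/q)
          * (ω ^ ((n:ℝ)/q) * (∫ t in Ioi (1:ℝ), (w t) ^ q / t ^ α) ^ ((n:ℝ)/q))
        = (ω ^ (1 - (n:ℝ)/q) * ω ^ ((n:ℝ)/q)) * (C ^ ((n:ℝ)/q)
          * (∫ t in Ioi (1:ℝ), (w t) ^ q / t ^ α) ^ ((n:ℝ)/q)) := by ring
    _ = _ := by rw [h1]
  rw [hrhs]
  have hC' : C ^ ((n:ℝ)/q) * (∫ t in Ioi (1:ℝ), (w t) ^ q / t ^ α) ^ ((n:ℝ)/q)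
      ≤ (∫ t in Ioi (1:ℝ), (w' t)^n) - (((n:ℝ)-1)/n)^n * ∫ t in Ioi (1:ℝ), (w t / t)^n := by
    rw [hC]
    exact hcore
  have hfin := mul_le_mul_of_nonneg_left hC' hω0.le
  rw [Real.rpow_natCast]
  calc ω * (C ^ ((n:ℝ)/q) * (∫ t in Ioi (1:ℝ), (w t) ^ q / t ^ α) ^ ((n:ℝ)/q))
      ≤ ω * ((∫ t in Ioi (1:ℝ), (w' t)^n) - (((n:ℝ)-1)/n)^n * ∫ t in Ioi (1:ℝ), (w t / t)^n) :=
        hfin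
  _ = ω * (∫ t in Ioi (1:ℝ), (w' t)^n)
      - (((n:ℝ)-1)/n)^n * (ω * ∫ t in Ioi (1:ℝ), (w t / t)^n) := by ring
end

section
/- Let v : (0,∞) → ℝ be smooth with compact support in (0,∞). Then for every R > 0, ∫₀^∞ |v(r) − v(R)|² / (r (log(R/r))²) dr ≤ 4 ∫₀^∞ |v'(r)|² r dr, and the constant 4 is the p = Q = 2 case of the sharp constant (p/(p−1))^p. -/
set_option maxHeartbeats 1000000

open MeasureTheory Set Filter
open scoped Topology

private lemma log_ratio_lower {R r : ℝ} (hR : 0 < R) (hr : 0 < r) :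
    |r - R| / max r R ≤ |Real.log (R / r)| := by
  rcases lt_trichotomy r R with h | h | h
  · have hmax : max r R = R := max_eq_right h.le
    have h1 : Real.log (r / R) ≤ r / R - 1 := Real.log_le_sub_one_of_pos (by positivity)
    have h2 : Real.log (R / r) = - Real.log (r / R) := by
      rw [← Real.log_inv]; congr 1; rw [inv_div]
    have hkey : (R - r) / R ≤ Real.log (R / r) := by
      rw [h2]
      have h3 : r / R - 1 = -((R - r) / R) := by field_simp; ring
      linarith [h1.trans_eq h3]
    have hnn : (0:ℝ) ≤ (R - r) / R := div_nonneg (by linarith) hR.le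
    rw [hmax, abs_of_nonpos (by linarith), abs_of_nonneg (hnn.trans hkey)]
    calc -(r - R) / R = (R - r) / R := by ring_nf
    _ ≤ _ := hkey
  · simp [h]
  · have hmax : max r R = r := max_eq_left h.le
    have h1 : Real.log (R / r) ≤ R / r - 1 := Real.log_le_sub_one_of_pos (by positivity)
    have h2 : Real.log (R / r) ≤ 0 := by
      apply Real.log_nonpos (by positivity)
      rw [div_le_one hr]; exact h.le
    have h3 : R / r - 1 = -((r - R) / r) := by field_simp; ring
    rw [hmax, abs_of_nonneg (by linarith : (0:ℝ) ≤ r - R), abs_of_nonpos h2]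
    linarith [h1.trans_eq h3]

/-- Two-dimensional radial critical Hardy (Leray-type) inequality: for `v` smooth
with compact support in `(0,∞)` and every `R > 0`,
`∫₀^∞ |v(r) - v(R)|² / (r (log(R/r))²) dr ≤ 4 ∫₀^∞ |v'(r)|² r dr`,
the constant `4` being the `p = Q = 2` case of the sharp constant `(p/(p-1))^p`. -/
theorem radial_critical_hardy_two (v : ℝ → ℝ) (hv : ContDiff ℝ (⊤ : ℕ∞) v)
    (hvsupp : HasCompactSupport v) (hsupp : tsupport v ⊆ Set.Ioi 0) :
    (∀ R : ℝ, 0 < R →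
      ∫ r in Set.Ioi (0 : ℝ), |v r - v R| ^ 2 / (r * (Real.log (R / r)) ^ 2)
        ≤ 4 * ∫ r in Set.Ioi (0 : ℝ), |deriv v r| ^ 2 * r)
    ∧ ((2 : ℝ) / (2 - 1)) ^ (2 : ℕ) = 4 := by
  constructor
  · intro R hR
    simp only [sq_abs]
    -- basic facts about v
    have hvdiff : Differentiable ℝ v := hv.differentiable (by simp)
    have hv' : Continuous (deriv v) := hv.continuous_deriv (by simp)
    obtain ⟨M, hM⟩ := hvsupp.deriv.exists_bound_of_continuous hv'
    have hM0 : 0 ≤ M := le_trans (norm_nonneg _) (hM 0)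
    have hLip : ∀ x y : ℝ, |v x - v y| ≤ M * |x - y| := by
      intro x y
      have := Convex.norm_image_sub_le_of_norm_deriv_le (s := Set.univ)
        (fun z _ => hvdiff z) (fun z _ => hM z) convex_univ (Set.mem_univ y) (Set.mem_univ x)
      simpa [Real.norm_eq_abs] using this
    -- support bounds
    obtain ⟨a, b, ha, hva, hvb⟩ : ∃ a b : ℝ, 0 < a ∧ (∀ r, r < a → v r = 0) ∧
        (∀ r, b < r → v r = 0) := by
      rcases Set.eq_empty_or_nonempty (tsupport v) with he | hne
      · exact ⟨1, 1, one_pos, fun r _ => image_eq_zero_of_notMem_tsupport (by simp [he]),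
          fun r _ => image_eq_zero_of_notMem_tsupport (by simp [he])⟩
      · refine ⟨sInf (tsupport v), sSup (tsupport v), hsupp (hvsupp.sInf_mem hne), ?_, ?_⟩
        · intro r hr
          apply image_eq_zero_of_notMem_tsupport
          exact fun hmem => absurd (csInf_le hvsupp.bddBelow hmem) (not_le.2 hr)
        · intro r hr
          apply image_eq_zero_of_notMem_tsupport
          exact fun hmem => absurd (le_csSup hvsupp.bddAbove hmem) (not_le.2 hr)
    have hdvb : ∀ r, b < r → deriv v r = 0 := by
      intro r hr
      have hev : v =ᶠ[𝓝 r] (fun _ => (0:ℝ)) :=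
        eventually_of_mem (Ioi_mem_nhds hr) (fun x hx => hvb x hx)
      rw [hev.deriv_eq]; simp
    -- notation
    set L : ℝ → ℝ := fun r => Real.log (R / r) with hLdef
    set u : ℝ → ℝ := fun r => v r - v R with hudef
    set g : ℝ → ℝ := fun r => (L r)⁻¹ with hgdef
    set h : ℝ → ℝ := fun r => (u r) ^ 2 / (r * (L r) ^ 2) with hhdef
    set φ : ℝ → ℝ := fun r => 2 * u r * deriv v r * g r with hφdef
    set G : ℝ → ℝ := fun r => (u r) ^ 2 * g r with hGdef
    have huR : u R = 0 := by simp [hudef]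
    have hGR : G R = 0 := by simp [hGdef, huR]
    have hG0 : G 0 = 0 := by simp [hGdef, hgdef, hLdef]
    -- parameters
    set a' : ℝ := min a R / 2 with ha'def
    set b' : ℝ := max b R + 1 with hb'def
    have ha'0 : 0 < a' := by positivity
    have ha'a : a' < a := by
      have : min a R ≤ a := min_le_left _ _
      simp only [ha'def]; linarith
    have ha'R : a' < R := by
      have : min a R ≤ R := min_le_right _ _
      simp only [ha'def]; linarith
    have hb'R : R < b' := by
      have : R ≤ max b R := le_max_right _ _
      simp only [hb'def]; linarith
    have hb'b : b < b' := by
      have : b ≤ max b R := le_max_left _ _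
      simp only [hb'def]; linarith
    -- derivative facts
    have hLder : ∀ r : ℝ, 0 < r → HasDerivAt L (-r⁻¹) r := by
      intro r hr
      have h1 : HasDerivAt (fun x : ℝ => Real.log R - Real.log x) (0 - r⁻¹) r :=
        (hasDerivAt_const r (Real.log R)).sub (Real.hasDerivAt_log (ne_of_gt hr))
      have hev : L =ᶠ[𝓝 r] (fun x => Real.log R - Real.log x) :=
        eventually_of_mem (Ioi_mem_nhds hr)
          (fun x hx => Real.log_div (ne_of_gt hR) (ne_of_gt hx))
      simpa using h1.congr_of_eventuallyEq hev
    have hLne : ∀ r : ℝ, 0 < r → r ≠ R → L r ≠ 0 := by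
      intro r hr hne hzero
      rcases Real.log_eq_zero.1 hzero with h0 | h0 | h0
      · exact absurd h0 (by positivity)
      · exact hne ((div_eq_one_iff_eq (ne_of_gt hr)).1 h0).symm
      · nlinarith [div_pos hR hr]
    have hgder : ∀ r : ℝ, 0 < r → r ≠ R → HasDerivAt g (1 / (r * (L r) ^ 2)) r := by
      intro r hr hne
      have h0 := (hLder r hr).inv (hLne r hr hne)
      have heq : 1 / (r * (L r) ^ 2) = -(-r⁻¹) / (L r) ^ 2 := by
        field_simp
      rw [heq]; exact h0
    have huder : ∀ r : ℝ, HasDerivAt u (deriv v r) r := fun r =>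
      ((hvdiff r).hasDerivAt).sub_const _
    have hucont : Continuous u := hv.continuous.sub continuous_const
    have hGder : ∀ r : ℝ, 0 < r → r ≠ R → HasDerivAt G (φ r + h r) r := by
      intro r hr hne
      have h1 := (((huder r).pow 2).mul (hgder r hr hne))
      refine h1.congr_deriv ?_
      have hL := hLne r hr hne
      simp only [hφdef, hhdef, hgdef]
      field_simp
      simp only [Pi.pow_apply]; push_cast; ring
    -- continuity and limits of g
    have hgc0 : Tendsto g (𝓝[>] (0:ℝ)) (𝓝 0) := by
      have h1 : Tendsto (fun r : ℝ => R / r) (𝓝[>] (0:ℝ)) atTop := by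
        have := tendsto_inv_nhdsGT_zero (𝕜 := ℝ)
        have h2 := this.const_mul_atTop hR
        simpa [div_eq_mul_inv] using h2
      have h3 : Tendsto L (𝓝[>] (0:ℝ)) atTop := Real.tendsto_log_atTop.comp h1
      exact h3.inv_tendsto_atTop
    have hgtop : Tendsto g atTop (𝓝 0) := by
      have h1 : Tendsto (fun r : ℝ => r / R) atTop atTop :=
        tendsto_id.atTop_div_const hR
      have h2 : Tendsto (fun r : ℝ => (Real.log (r / R))⁻¹) atTop (𝓝 0) :=
        (Real.tendsto_log_atTop.comp h1).inv_tendsto_atTop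
      have h3 : Tendsto (fun r : ℝ => -(Real.log (r / R))⁻¹) atTop (𝓝 (-0)) := h2.neg
      rw [neg_zero] at h3
      apply h3.congr'
      filter_upwards [eventually_gt_atTop (0:ℝ)] with r hr
      simp only [hLdef, hgdef]
      rw [show R / r = (r / R)⁻¹ by rw [inv_div], Real.log_inv, inv_neg]
    -- bound for |g|
    have hgabs : ∀ r : ℝ, 0 < r → r ≠ R → |g r| ≤ max r R / |r - R| := by
      intro r hr hne
      have hpos : 0 < |r - R| / max r R := by
        apply div_pos (abs_pos.2 (sub_ne_zero.2 hne)) (lt_max_of_lt_right hR)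
      have h1 := log_ratio_lower hR hr
      have h2 : |g r| = |L r|⁻¹ := by simp [hgdef, abs_inv]
      rw [h2, show max r R / |r - R| = (|r - R| / max r R)⁻¹ by rw [inv_div]]
      exact inv_anti₀ hpos h1
    -- squeeze at R
    have hGtendR : Tendsto G (𝓝[≠] R) (𝓝 0) := by
      apply squeeze_zero_norm' (a := fun r => (M ^ 2 * (R + 1)) * |r - R|)
      · have hmem : Set.Ioo (R/2) (R+1) ∈ 𝓝[≠] R :=
          nhdsWithin_le_nhds (Ioo_mem_nhds (by linarith) (by linarith))
        filter_upwards [hmem] with r hrmem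
        rcases eq_or_ne r R with rfl | hne
        · simp [hGR]
        · have hr0 : 0 < r := lt_trans (by linarith) hrmem.1
          have h1 : |u r| ≤ M * |r - R| := hLip r R
          have h2 : |g r| ≤ max r R / |r - R| := hgabs r hr0 hne
          have h3 : max r R ≤ R + 1 := max_le hrmem.2.le (by linarith)
          have habs : ‖G r‖ = (u r)^2 * |g r| := by
            rw [Real.norm_eq_abs, hGdef]; simp [abs_mul, sq_abs]
          rw [habs]
          have h4 : (u r)^2 ≤ (M * |r - R|)^2 := by
            rw [← sq_abs (u r)]
            exact pow_le_pow_left₀ (abs_nonneg _) h1 2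
          have h5 : |r - R| ≠ 0 := abs_ne_zero.2 (sub_ne_zero.2 hne)
          calc (u r)^2 * |g r| ≤ (M * |r - R|)^2 * (max r R / |r - R|) := by
                apply mul_le_mul h4 h2 (abs_nonneg _) (by positivity)
          _ = M^2 * max r R * |r - R| := by field_simp
          _ ≤ M^2 * (R+1) * |r - R| := by
                apply mul_le_mul_of_nonneg_right _ (abs_nonneg _)
                apply mul_le_mul_of_nonneg_left h3 (by positivity)
          _ = M^2 * (R+1) * |r - R| := rfl
      · have h1 : Tendsto (fun r : ℝ => |r - R|) (𝓝[≠] R) (𝓝 0) := by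
          have : Tendsto (fun r : ℝ => |r - R|) (𝓝 R) (𝓝 |R - R|) :=
            ((continuous_id.sub continuous_const).abs).tendsto R
          simpa using this.mono_left nhdsWithin_le_nhds
        simpa using h1.const_mul (M ^ 2 * (R + 1))
    -- continuity of g at 0 within
    have hgc0' : ContinuousWithinAt g (Set.Ici (0:ℝ)) 0 := by
      rw [← Set.Ioi_insert, continuousWithinAt_insert_self]
      unfold ContinuousWithinAt
      have : g 0 = 0 := by simp [hgdef, hLdef]
      rw [this]
      exact hgc0
    have hGcontR : ContinuousWithinAt G (Set.Ici R) R := by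
      rw [← Set.Ioi_insert, continuousWithinAt_insert_self]
      unfold ContinuousWithinAt
      rw [hGR]
      exact hGtendR.mono_left (nhdsWithin_mono _ (fun x hx => ne_of_gt hx))
    have hGcont : ContinuousOn G (Set.Icc 0 R) := by
      intro x hx
      rcases eq_or_lt_of_le hx.1 with rfl | h0x
      · apply ContinuousWithinAt.mono _ (Set.Icc_subset_Ici_self)
        rw [← Set.Ioi_insert, continuousWithinAt_insert_self]
        unfold ContinuousWithinAt
        rw [hG0]
        have hu2 : Tendsto (fun r => (u r)^2) (𝓝[>] (0:ℝ)) (𝓝 ((u 0)^2)) :=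
          ((hucont.pow 2).tendsto 0).mono_left nhdsWithin_le_nhds
        simpa using hu2.mul hgc0
      rcases eq_or_lt_of_le hx.2 with rfl | hxR
      · rw [show Set.Icc (0:ℝ) x = insert x (Set.Ico 0 x) by
            rw [Set.Ico_insert_right hx.1], continuousWithinAt_insert_self]
        unfold ContinuousWithinAt
        rw [hGR]
        exact hGtendR.mono_left (nhdsWithin_mono _ (fun y hy => ne_of_lt hy.2))
      · exact ((hGder x h0x (ne_of_lt hxR)).continuousAt).continuousWithinAt
    -- measurability
    have hmL : Measurable L := Real.measurable_log.comp (measurable_const.div measurable_id)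
    have hmh : Measurable h :=
      (hucont.measurable.pow_const 2).div (measurable_id.mul (hmL.pow_const 2))
    have hmφ : Measurable φ :=
      ((measurable_const.mul hucont.measurable).mul hv'.measurable).mul hmL.inv
    -- pointwise bounds
    have hhnonneg : ∀ r : ℝ, 0 < r → 0 ≤ h r := by
      intro r hr
      apply div_nonneg (sq_nonneg _)
      positivity
    have hhbound : ∀ r : ℝ, 0 < r → r ≠ R → h r ≤ M ^ 2 * (max r R) ^ 2 / r := by
      intro r hr hne
      have hL1 := log_ratio_lower hR hr
      have hmax : 0 < max r R := lt_max_of_lt_right hR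
      have hrR : (0:ℝ) < (r - R) ^ 2 := by
        have hne' : r - R ≠ 0 := sub_ne_zero.2 hne
        positivity
      have h1 : (r - R) ^ 2 / (max r R) ^ 2 ≤ (L r) ^ 2 := by
        have h1' := pow_le_pow_left₀ (by positivity) hL1 2
        calc (r - R) ^ 2 / (max r R) ^ 2 = (|r - R| / max r R) ^ 2 := by
              rw [div_pow, sq_abs]
        _ ≤ |L r| ^ 2 := h1'
        _ = (L r) ^ 2 := sq_abs _
      have h2 : (u r) ^ 2 ≤ M ^ 2 * (r - R) ^ 2 := by
        have h2' := pow_le_pow_left₀ (abs_nonneg _) (hLip r R) 2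
        calc (u r) ^ 2 = |u r| ^ 2 := (sq_abs _).symm
        _ ≤ (M * |r - R|) ^ 2 := h2'
        _ = M ^ 2 * (r - R) ^ 2 := by rw [mul_pow, sq_abs]
      have hd : 0 < r * ((r - R) ^ 2 / (max r R) ^ 2) := by positivity
      calc h r = (u r) ^ 2 / (r * (L r) ^ 2) := rfl
      _ ≤ (M ^ 2 * (r - R) ^ 2) / (r * ((r - R) ^ 2 / (max r R) ^ 2)) :=
            div_le_div₀ (by positivity) h2 hd (mul_le_mul_of_nonneg_left h1 hr.le)
      _ = M ^ 2 * (max r R) ^ 2 / r := by field_simp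
    have hφbound : ∀ r : ℝ, 0 < r → r ≠ R → |φ r| ≤ 2 * M * |deriv v r| * max r R := by
      intro r hr hne
      have h2 := hgabs r hr hne
      have h1 : |u r| ≤ M * |r - R| := hLip r R
      have h5 : |r - R| ≠ 0 := abs_ne_zero.2 (sub_ne_zero.2 hne)
      have habs : |φ r| = 2 * |u r| * |deriv v r| * |g r| := by
        simp only [hφdef]
        rw [abs_mul, abs_mul, abs_mul]
        norm_num
      rw [habs]
      have hy : 0 ≤ 2 * (M * |r - R|) * |deriv v r| :=
        mul_nonneg (mul_nonneg (by norm_num) (mul_nonneg hM0 (abs_nonneg _))) (abs_nonneg _)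
      calc 2 * |u r| * |deriv v r| * |g r|
          ≤ 2 * (M * |r - R|) * |deriv v r| * (max r R / |r - R|) := by
            apply mul_le_mul _ h2 (abs_nonneg _) hy
            exact mul_le_mul_of_nonneg_right
              (mul_le_mul_of_nonneg_left h1 (by norm_num)) (abs_nonneg _)
      _ = 2 * M * |deriv v r| * max r R := by field_simp
    -- integrability of h
    have hgcont0' : ContinuousOn g (Set.Icc 0 a') := by
      intro x hx
      rcases eq_or_lt_of_le hx.1 with rfl | h0x
      · exact hgc0'.mono Set.Icc_subset_Ici_self
      · exact ((hgder x h0x (ne_of_lt (lt_of_le_of_lt hx.2 ha'R))).continuousAt).continuousWithinAt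
    have hIntDeriv0 : IntegrableOn (fun r => 1 / (r * (L r) ^ 2)) (Set.Ioc 0 a') := by
      apply intervalIntegral.integrableOn_deriv_of_nonneg hgcont0'
      · intro x hx
        exact hgder x hx.1 (ne_of_lt (lt_trans hx.2 ha'R))
      · intro x hx
        have hx0 : 0 < x := hx.1
        positivity
    have hIntA : IntegrableOn h (Set.Ioo 0 a') := by
      have h1 : IntegrableOn (fun r => (v R) ^ 2 * (1 / (r * (L r) ^ 2))) (Set.Ioo 0 a') :=
        (hIntDeriv0.mono_set Set.Ioo_subset_Ioc_self).const_mul _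
      apply h1.congr_fun _ measurableSet_Ioo
      intro x hx
      have hvx : v x = 0 := hva x (lt_trans hx.2 ha'a)
      simp only [hhdef, hudef, hvx, zero_sub, neg_sq]
      rw [mul_one_div]
    have hIntB : IntegrableOn h (Set.Ico a' R) := by
      apply Measure.integrableOn_of_bounded (M := M ^ 2 * R ^ 2 / a') measure_Ico_lt_top.ne
        hmh.aestronglyMeasurable
      rw [ae_restrict_iff' measurableSet_Ico]
      apply ae_of_all
      intro x hx
      have hx0 : 0 < x := lt_of_lt_of_le ha'0 hx.1
      rw [Real.norm_eq_abs, abs_of_nonneg (hhnonneg x hx0)]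
      calc h x ≤ M ^ 2 * (max x R) ^ 2 / x := hhbound x hx0 (ne_of_lt hx.2)
      _ = M ^ 2 * R ^ 2 / x := by rw [max_eq_right hx.2.le]
      _ ≤ M ^ 2 * R ^ 2 / a' := by
            apply div_le_div_of_nonneg_left (by positivity) ha'0 hx.1
    have hIntC : IntegrableOn h (Set.Ioc R b') := by
      apply Measure.integrableOn_of_bounded (M := M ^ 2 * b' ^ 2 / R) measure_Ioc_lt_top.ne
        hmh.aestronglyMeasurable
      rw [ae_restrict_iff' measurableSet_Ioc]
      apply ae_of_all
      intro x hx
      have hx0 : 0 < x := lt_trans hR hx.1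
      rw [Real.norm_eq_abs, abs_of_nonneg (hhnonneg x hx0)]
      have hmaxle : max x R ≤ b' := max_le hx.2 (le_of_lt hb'R)
      have hmaxnn : 0 ≤ max x R := le_max_of_le_right hR.le
      calc h x ≤ M ^ 2 * (max x R) ^ 2 / x := hhbound x hx0 (ne_of_gt hx.1)
      _ ≤ M ^ 2 * b' ^ 2 / R :=
            div_le_div₀ (by positivity)
              (mul_le_mul_of_nonneg_left (pow_le_pow_left₀ hmaxnn hmaxle 2) (sq_nonneg M))
              hR hx.1.le
    have hIntDerivTop : IntegrableOn (fun r => 1 / (r * (L r) ^ 2)) (Set.Ioi b') := by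
      apply integrableOn_Ioi_deriv_of_nonneg
        ((hgder b' (lt_trans hR hb'R) (ne_of_gt hb'R)).continuousAt.continuousWithinAt)
        (fun x hx => hgder x (lt_trans (lt_trans hR hb'R) hx) (ne_of_gt (lt_trans hb'R hx)))
      · intro x hx
        have hx0 : 0 < x := lt_trans (lt_trans hR hb'R) hx
        positivity
      · exact hgtop
    have hIntD : IntegrableOn h (Set.Ioi b') := by
      have h1 : IntegrableOn (fun r => (v R) ^ 2 * (1 / (r * (L r) ^ 2))) (Set.Ioi b') :=
        hIntDerivTop.const_mul _
      apply h1.congr_fun _ measurableSet_Ioi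
      intro x hx
      have hvx : v x = 0 := hvb x (lt_trans hb'b hx)
      simp only [hhdef, hudef, hvx, zero_sub, neg_sq]
      rw [mul_one_div]
    have hIntIoo : IntegrableOn h (Set.Ioo 0 R) := by
      rw [← Set.Ioo_union_Ico_eq_Ioo ha'0 ha'R.le]
      exact hIntA.union hIntB
    have hIntIoiR : IntegrableOn h (Set.Ioi R) := by
      rw [← Set.Ioc_union_Ioi_eq_Ioi hb'R.le]
      exact hIntC.union hIntD
    have hIntIciR : IntegrableOn h (Set.Ici R) := hIntIoiR.congr_set_ae Ioi_ae_eq_Ici.symm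
    have hIntIoi : IntegrableOn h (Set.Ioi 0) := by
      rw [← Set.Ioo_union_Ici_eq_Ioi hR]
      exact hIntIoo.union hIntIciR
    -- integrability of φ
    have hφIoo : IntegrableOn φ (Set.Ioo 0 R) := by
      apply Measure.integrableOn_of_bounded (M := 2 * M * M * R) measure_Ioo_lt_top.ne
        hmφ.aestronglyMeasurable
      rw [ae_restrict_iff' measurableSet_Ioo]
      apply ae_of_all
      intro x hx
      rw [Real.norm_eq_abs]
      calc |φ x| ≤ 2 * M * |deriv v x| * max x R := hφbound x hx.1 (ne_of_lt hx.2)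
      _ = 2 * M * |deriv v x| * R := by rw [max_eq_right hx.2.le]
      _ ≤ 2 * M * M * R := by
            apply mul_le_mul_of_nonneg_right _ hR.le
            apply mul_le_mul_of_nonneg_left _ (by linarith)
            simpa [Real.norm_eq_abs] using hM x
    have hφIoc : IntegrableOn φ (Set.Ioc R b') := by
      apply Measure.integrableOn_of_bounded (M := 2 * M * M * b') measure_Ioc_lt_top.ne
        hmφ.aestronglyMeasurable
      rw [ae_restrict_iff' measurableSet_Ioc]
      apply ae_of_all
      intro x hx
      have hx0 : 0 < x := lt_trans hR hx.1
      rw [Real.norm_eq_abs]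
      have hmaxle : max x R ≤ b' := max_le hx.2 (le_of_lt hb'R)
      have hmaxnn : 0 ≤ max x R := le_max_of_le_right hR.le
      calc |φ x| ≤ 2 * M * |deriv v x| * max x R := hφbound x hx0 (ne_of_gt hx.1)
      _ ≤ 2 * M * M * b' := by
            apply mul_le_mul _ hmaxle hmaxnn (by positivity)
            apply mul_le_mul_of_nonneg_left _ (by linarith)
            simpa [Real.norm_eq_abs] using hM x
    have hφIoiTop : IntegrableOn φ (Set.Ioi b') := by
      have h1 : IntegrableOn (fun _ : ℝ => (0:ℝ)) (Set.Ioi b') := integrableOn_zero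
      apply h1.congr_fun _ measurableSet_Ioi
      intro x hx
      have hdx : deriv v x = 0 := hdvb x (lt_trans hb'b hx)
      simp [hφdef, hdx]
    have hφIoiR : IntegrableOn φ (Set.Ioi R) := by
      rw [← Set.Ioc_union_Ioi_eq_Ioi hb'R.le]
      exact hφIoc.union hφIoiTop
    have hφIciR : IntegrableOn φ (Set.Ici R) := hφIoiR.congr_set_ae Ioi_ae_eq_Ici.symm
    have hφIoi : IntegrableOn φ (Set.Ioi 0) := by
      rw [← Set.Ioo_union_Ici_eq_Ioi hR]
      exact hφIoo.union hφIciR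
    -- FTC on (0, R)
    have hFTC1 : ∫ x in Set.Ioo 0 R, (φ x + h x) = 0 := by
      have hii : IntervalIntegrable (fun x => φ x + h x) volume 0 R := by
        rw [intervalIntegrable_iff_integrableOn_Ioo_of_le hR.le]
        exact hφIoo.add hIntIoo
      have hkey := intervalIntegral.integral_eq_sub_of_hasDerivAt_of_le hR.le hGcont
        (fun x hx => hGder x hx.1 (ne_of_lt hx.2)) hii
      rw [hGR, hG0, sub_zero, intervalIntegral.integral_of_le hR.le,
        integral_Ioc_eq_integral_Ioo] at hkey
      exact hkey
    -- FTC on (R, ∞)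
    have hGtendTop : Tendsto G atTop (𝓝 0) := by
      have h1 : Tendsto (fun r => (v R) ^ 2 * g r) atTop (𝓝 ((v R) ^ 2 * 0)) :=
        hgtop.const_mul _
      rw [mul_zero] at h1
      apply h1.congr'
      filter_upwards [eventually_gt_atTop b] with r hrb
      simp [hGdef, hudef, hvb r hrb, neg_sq]
    have hFTC2 : ∫ x in Set.Ioi R, (φ x + h x) = 0 := by
      have hkey := integral_Ioi_of_hasDerivAt_of_tendsto hGcontR
        (fun x hx => hGder x (lt_trans hR hx) (ne_of_gt hx)) (hφIoiR.add hIntIoiR) hGtendTop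
      rw [hkey, hGR]
      norm_num
    -- splitting integrals
    have hIsplit : ∀ f : ℝ → ℝ, IntegrableOn f (Set.Ioo 0 R) → IntegrableOn f (Set.Ici R) →
        ∫ x in Set.Ioi 0, f x = (∫ x in Set.Ioo 0 R, f x) + ∫ x in Set.Ioi R, f x := by
      intro f h1 h2
      have hdisj : Disjoint (Set.Ioo 0 R) (Set.Ici R) := by
        rw [Set.disjoint_left]
        intro x hx hx'
        exact absurd hx' (not_le.2 hx.2)
      rw [← Set.Ioo_union_Ici_eq_Ioi hR, setIntegral_union hdisj measurableSet_Ici h1 h2,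
        integral_Ici_eq_integral_Ioi]
    have hIeq : ∫ x in Set.Ioi 0, h x = - ∫ x in Set.Ioi 0, φ x := by
      have e1 : ∫ x in Set.Ioo 0 R, (φ x + h x)
          = (∫ x in Set.Ioo 0 R, φ x) + ∫ x in Set.Ioo 0 R, h x := integral_add hφIoo hIntIoo
      have e2 : ∫ x in Set.Ioi R, (φ x + h x)
          = (∫ x in Set.Ioi R, φ x) + ∫ x in Set.Ioi R, h x := integral_add hφIoiR hIntIoiR
      rw [hIsplit h hIntIoo hIntIciR, hIsplit φ hφIoo hφIciR]
      rw [e1] at hFTC1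
      rw [e2] at hFTC2
      linarith
    -- nonnegativity
    have hInonneg : 0 ≤ ∫ x in Set.Ioi (0:ℝ), h x := by
      apply setIntegral_nonneg measurableSet_Ioi
      intro x hx
      exact hhnonneg x hx
    have hJnonneg : 0 ≤ ∫ r in Set.Ioi (0:ℝ), (deriv v r) ^ 2 * r := by
      apply setIntegral_nonneg measurableSet_Ioi
      intro x hx
      have hx0 : (0:ℝ) < x := hx
      positivity
    -- integrability of the right-hand side
    have hJcont : Continuous (fun r => (deriv v r) ^ 2 * r) := (hv'.pow 2).mul continuous_id
    have hJsupp : HasCompactSupport (fun r => (deriv v r) ^ 2 * r) := by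
      have heq : (fun r => (deriv v r) ^ 2 * r) = (fun r : ℝ => deriv v r * (deriv v r * r)) := by
        funext r; ring
      rw [heq]
      exact hvsupp.deriv.mul_right
    have hJint : IntegrableOn (fun r => (deriv v r) ^ 2 * r) (Set.Ioi 0) :=
      (hJcont.integrable_of_hasCompactSupport hJsupp).integrableOn
    -- Cauchy-Schwarz
    set f₁ : ℝ → ℝ := fun r => |u r| / (Real.sqrt r * |L r|) with hf₁def
    set f₂ : ℝ → ℝ := fun r => 2 * |deriv v r| * Real.sqrt r with hf₂def
    have hf₁m : Measurable f₁ :=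
      hucont.measurable.abs.div (Real.continuous_sqrt.measurable.mul hmL.abs)
    have hf₂m : Measurable f₂ :=
      (measurable_const.mul hv'.measurable.abs).mul Real.continuous_sqrt.measurable
    have hf₁sq : ∀ x ∈ Set.Ioi (0:ℝ), f₁ x ^ 2 = h x := by
      intro x hx
      have hx' : (0:ℝ) < x := hx
      simp only [hf₁def, hhdef]
      rw [div_pow, mul_pow, Real.sq_sqrt hx'.le, sq_abs, sq_abs]
    have hf₂sq : ∀ x ∈ Set.Ioi (0:ℝ), f₂ x ^ 2 = 4 * ((deriv v x) ^ 2 * x) := by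
      intro x hx
      have hx' : (0:ℝ) < x := hx
      simp only [hf₂def]
      rw [mul_pow, mul_pow, Real.sq_sqrt hx'.le, sq_abs]
      ring
    have hf₁mem : MemLp f₁ (ENNReal.ofReal 2) (volume.restrict (Set.Ioi 0)) := by
      rw [show ENNReal.ofReal 2 = 2 by norm_num]
      rw [memLp_two_iff_integrable_sq hf₁m.aestronglyMeasurable]
      exact IntegrableOn.congr_fun hIntIoi (fun x hx => (hf₁sq x hx).symm) measurableSet_Ioi
    have hf₂mem : MemLp f₂ (ENNReal.ofReal 2) (volume.restrict (Set.Ioi 0)) := by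
      rw [show ENNReal.ofReal 2 = 2 by norm_num]
      rw [memLp_two_iff_integrable_sq hf₂m.aestronglyMeasurable]
      have h1 : IntegrableOn (fun x => 4 * ((deriv v x) ^ 2 * x)) (Set.Ioi 0) :=
        hJint.const_mul 4
      exact IntegrableOn.congr_fun h1 (fun x hx => (hf₂sq x hx).symm) measurableSet_Ioi
    have hφeq : ∀ x ∈ Set.Ioi (0:ℝ), |φ x| = f₁ x * f₂ x := by
      intro x hx
      have hx' : (0:ℝ) < x := hx
      rcases eq_or_ne x R with rfl | hne
      · simp [hφdef, hf₁def, hf₂def, huR]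
      · have hLx := hLne x hx' hne
        have hLabs : |L x| ≠ 0 := abs_ne_zero.2 hLx
        have hsq : Real.sqrt x ≠ 0 := (Real.sqrt_pos.2 hx').ne'
        have habsφ : |φ x| = 2 * |u x| * |deriv v x| * |L x|⁻¹ := by
          simp only [hφdef, hgdef]
          rw [abs_mul, abs_mul, abs_mul, abs_inv]
          norm_num
        rw [habsφ]
        simp only [hf₁def, hf₂def]
        field_simp
    have hCS : ∫ x in Set.Ioi (0:ℝ), f₁ x * f₂ x ≤
        (∫ x in Set.Ioi (0:ℝ), f₁ x ^ (2:ℝ)) ^ (1 / (2:ℝ)) *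
        (∫ x in Set.Ioi (0:ℝ), f₂ x ^ (2:ℝ)) ^ (1 / (2:ℝ)) := by
      apply integral_mul_le_Lp_mul_Lq_of_nonneg Real.HolderConjugate.two_two
      · apply ae_of_all
        intro x
        positivity
      · apply ae_of_all
        intro x
        positivity
      · exact hf₁mem
      · exact hf₂mem
    have hrpow1 : ∫ x in Set.Ioi (0:ℝ), f₁ x ^ (2:ℝ) = ∫ x in Set.Ioi (0:ℝ), h x := by
      apply setIntegral_congr_fun measurableSet_Ioi
      intro x hx
      show f₁ x ^ (2:ℝ) = h x
      rw [Real.rpow_two]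
      exact hf₁sq x hx
    have hrpow2 : ∫ x in Set.Ioi (0:ℝ), f₂ x ^ (2:ℝ)
        = 4 * ∫ r in Set.Ioi (0:ℝ), (deriv v r) ^ 2 * r := by
      rw [show (4 : ℝ) * ∫ r in Set.Ioi (0:ℝ), (deriv v r) ^ 2 * r
          = ∫ r in Set.Ioi (0:ℝ), 4 * ((deriv v r) ^ 2 * r) from (integral_const_mul 4 _).symm]
      apply setIntegral_congr_fun measurableSet_Ioi
      intro x hx
      show f₂ x ^ (2:ℝ) = 4 * ((deriv v x) ^ 2 * x)
      rw [Real.rpow_two]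
      exact hf₂sq x hx
    have habs1 : (∫ x in Set.Ioi (0:ℝ), h x) ≤ ∫ x in Set.Ioi (0:ℝ), |φ x| := by
      rw [hIeq]
      refine (neg_le_abs _).trans ?_
      have hnorm := norm_integral_le_integral_norm (μ := volume.restrict (Set.Ioi 0)) φ
      simpa [Real.norm_eq_abs] using hnorm
    have habs2 : ∫ x in Set.Ioi (0:ℝ), |φ x| = ∫ x in Set.Ioi (0:ℝ), f₁ x * f₂ x :=
      setIntegral_congr_fun measurableSet_Ioi hφeq
    -- put everything together
    set I : ℝ := ∫ x in Set.Ioi (0:ℝ), h x with hIdef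
    set J : ℝ := ∫ r in Set.Ioi (0:ℝ), (deriv v r) ^ 2 * r with hJdef
    have hmain : I ≤ Real.sqrt I * (2 * Real.sqrt J) := by
      have hs4 : (4 * J) ^ (1 / (2:ℝ)) = 2 * Real.sqrt J := by
        rw [← Real.sqrt_eq_rpow, show (4:ℝ) * J = 2 ^ 2 * J by norm_num,
          Real.sqrt_mul (by positivity) J, Real.sqrt_sq (by norm_num : (0:ℝ) ≤ 2)]
      calc I ≤ ∫ x in Set.Ioi (0:ℝ), |φ x| := habs1
      _ = ∫ x in Set.Ioi (0:ℝ), f₁ x * f₂ x := habs2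
      _ ≤ (∫ x in Set.Ioi (0:ℝ), f₁ x ^ (2:ℝ)) ^ (1 / (2:ℝ)) *
            (∫ x in Set.Ioi (0:ℝ), f₂ x ^ (2:ℝ)) ^ (1 / (2:ℝ)) := hCS
      _ = (I : ℝ) ^ (1 / (2:ℝ)) * (4 * J) ^ (1 / (2:ℝ)) := by rw [hrpow1, hrpow2]
      _ = Real.sqrt I * (2 * Real.sqrt J) := by rw [← Real.sqrt_eq_rpow, hs4]
    have hIs := Real.sq_sqrt hInonneg
    have hJs := Real.sq_sqrt hJnonneg
    nlinarith [Real.sqrt_nonneg I, Real.sqrt_nonneg J,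
      sq_nonneg (Real.sqrt I - 2 * Real.sqrt J), hmain, hIs, hJs]
  · norm_num
end
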